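/- arXiv:0705.4236 — 7 statements merged into one kernel-verified Lean document; each statement's English description precedes it below -/
import Mathlib

section
/- Let a_1,…,a_n be nonzero vectors spanning ℂ^d, let ℓ_i = Σ_j (a_i)_j x_j be the corresponding nonzero linear forms in the field ℂ(x_1,…,x_d) of rational functions, and let φ : ℂ[e_1,…,e_n] → ℂ(x_1,…,x_d) be the ℂ-algebra homomorphism sending e_i to ℓ_i^{-1}. Then the kernel I(𝒜) of φ is generated, as an ideal, by the elements k_{S,c} = Σ_{i∈S} c_i Π_{j∈S∖{i}} e_j, where S ranges over the circuits of the configuration (the minimal subsets S ⊆ {1,…,n} such that {a_i : i ∈ S} is linearly dependent) and c = (c_i)_{i∈S} ranges over tuples of complex numbers with Σ_{i∈S} c_i a_i = 0. -/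
open scoped BigOperators

noncomputable section

open MvPolynomial

/-- The field `ℂ(x_1,…,x_d)` of rational functions. -/
abbrev RatFunField (d : ℕ) := FractionRing (MvPolynomial (Fin d) ℂ)

/-- The linear form `ℓ_i = Σ_j (a_i)_j x_j`, viewed in `ℂ(x_1,…,x_d)`. -/
def ellForm {d n : ℕ} (a : Fin n → Fin d → ℂ) (i : Fin n) : RatFunField d :=
  algebraMap (MvPolynomial (Fin d) ℂ) (RatFunField d)
    (∑ j : Fin d, C (a i j) * X j)

/-- The ℂ-algebra homomorphism `φ : ℂ[e_1,…,e_n] → ℂ(x_1,…,x_d)` sending `e_i ↦ ℓ_i⁻¹`. -/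
def phiHom {d n : ℕ} (a : Fin n → Fin d → ℂ) :
    MvPolynomial (Fin n) ℂ →+* RatFunField d :=
  eval₂Hom ((algebraMap (MvPolynomial (Fin d) ℂ) (RatFunField d)).comp
      (algebraMap ℂ (MvPolynomial (Fin d) ℂ)))
    (fun i => (ellForm a i)⁻¹)

/-- `S` indexes a linearly dependent subfamily of `a`. -/
def DepSet {d n : ℕ} (a : Fin n → Fin d → ℂ) (S : Finset (Fin n)) : Prop :=
  ¬ LinearIndependent ℂ (fun i : {x // x ∈ S} => a i)

/-- A circuit: a minimal subset `S ⊆ {1,…,n}` such that `{a_i : i ∈ S}` is linearly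
dependent. -/
def IsCircuit {d n : ℕ} (a : Fin n → Fin d → ℂ) (S : Finset (Fin n)) : Prop :=
  DepSet a S ∧ ∀ T ⊂ S, ¬ DepSet a T


/-!
The circuit relations map to `(Σ c_i ℓ_i) / Π ℓ_i = 0`, and cancelling coefficients against
relations on smaller dependent subsets shows that the polynomial `k_{S,c}` of *every* linear
relation lies in the circuit ideal `J`.

For the converse we induct on the number of vectors. Fix `a_{i₀}` and `w` with `⟨a_{i₀}, w⟩ = 1`.
Modulo `J`, each `e_j` with `a_j` parallel to `a_{i₀}` is a multiple of `e_{i₀}`, so an element of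
the kernel may be taken to be a polynomial in `e_{i₀}` whose coefficients involve only the
remaining variables. Specializing to the hyperplane `ℓ_{i₀} = 0`, i.e. substituting
`x ↦ x - ⟨x, w⟩ a_{i₀}` (legitimate after inverting the forms that stay nonzero there), shows that
the leading coefficient lies in the kernel for the contracted configuration
`a_j - ⟨a_j, w⟩ a_{i₀}`, hence by induction in its circuit ideal. Each relation of the contraction,
multiplied by `e_{i₀}`, is a relation of the original configuration up to a term free of `e_{i₀}`;
this lowers the degree in `e_{i₀}`. In degree zero the polynomial lives on the deleted
configuration, and induction applies directly.
-/

namespace OrlikTerao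

variable {K V σ τ ι : Type*}

section Circuits

variable [Field K] [AddCommGroup V] [Module K V] [DecidableEq σ]

def relPoly (S : Finset σ) (c : σ → K) : MvPolynomial σ K :=
  ∑ i ∈ S, C (c i) * ∏ j ∈ S.erase i, X j

variable (K) in
def IsCircuitOn (b : σ → V) (S : Finset σ) : Prop :=
  ¬ LinearIndepOn K b S ∧ ∀ T ⊂ S, LinearIndepOn K b T

variable (K) in
def circuitIdeal (b : σ → V) : Ideal (MvPolynomial σ K) :=
  Ideal.span {p | ∃ S c, IsCircuitOn K b S ∧ ∑ i ∈ S, c i • b i = 0 ∧ p = relPoly S c}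

theorem relPoly_add (S : Finset σ) (c d : σ → K) :
    relPoly S (c + d) = relPoly S c + relPoly S d := by
  simp only [relPoly, Pi.add_apply, C_add, add_mul, Finset.sum_add_distrib]

theorem relPoly_smul (S : Finset σ) (s : K) (c : σ → K) :
    relPoly S (s • c) = C s * relPoly S c := by
  simp only [relPoly, Pi.smul_apply, smul_eq_mul, C_mul, Finset.mul_sum, mul_assoc]

theorem relPoly_eq_X_mul_of_eq_zero {S : Finset σ} {c : σ → K} {j : σ} (hj : j ∈ S)
    (hcj : c j = 0) : relPoly S c = X j * relPoly (S.erase j) c := by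
  rw [relPoly, relPoly, ← Finset.sum_erase_add _ _ hj, hcj, map_zero, zero_mul, add_zero,
    Finset.mul_sum]
  refine Finset.sum_congr rfl fun i hi => ?_
  rw [Finset.erase_right_comm, ← Finset.mul_prod_erase _ _
    (Finset.mem_erase.2 ⟨(Finset.ne_of_mem_erase hi).symm, hj⟩)]
  ring

theorem relPoly_insert {S : Finset σ} {i : σ} (hi : i ∉ S) (c : σ → K) :
    relPoly (insert i S) c = X i * relPoly S c + C (c i) * ∏ j ∈ S, X j := by
  rw [relPoly, Finset.sum_insert hi, Finset.erase_insert hi, relPoly, Finset.mul_sum, add_comm]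
  congr 1
  refine Finset.sum_congr rfl fun j hj => ?_
  rw [Finset.erase_insert_of_ne (ne_of_mem_of_not_mem hj hi).symm,
    Finset.prod_insert fun h => hi (Finset.mem_of_mem_erase h)]
  ring

theorem rename_relPoly [DecidableEq τ] {f : σ → τ} (hf : Function.Injective f) (S : Finset σ)
    (c : σ → K) (e : τ → K) :
    rename f (relPoly S c) = relPoly (S.map ⟨f, hf⟩) (Function.extend f c e) := by
  simp only [relPoly, map_sum, map_mul, rename_C, map_prod, rename_X, Finset.sum_map]
  refine Finset.sum_congr rfl fun i _ => ?_
  rw [← Finset.map_erase, Finset.prod_map]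
  simp [hf.extend_apply]

theorem relPoly_mem_circuitIdeal {b : σ → V} {S : Finset σ} {c : σ → K}
    (hc : ∑ i ∈ S, c i • b i = 0) : relPoly S c ∈ circuitIdeal K b := by
  induction S using Finset.strongInduction generalizing c with
  | H S ih =>
  have of_eq_zero : ∀ d : σ → K, ∑ i ∈ S, d i • b i = 0 → ∀ j ∈ S, d j = 0 →
      relPoly S d ∈ circuitIdeal K b := by
    intro d hd j hj hdj
    rw [relPoly_eq_X_mul_of_eq_zero hj hdj]
    refine Ideal.mul_mem_left _ _ (ih _ (Finset.erase_ssubset hj) ?_)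
    rwa [Finset.sum_erase _ (by rw [hdj, zero_smul])]
  by_cases hzero : ∃ j ∈ S, c j = 0
  · obtain ⟨j, hj, hcj⟩ := hzero
    exact of_eq_zero c hc j hj hcj
  push Not at hzero
  by_cases hcirc : IsCircuitOn K b S
  · exact Ideal.subset_span ⟨S, c, hcirc, hc, rfl⟩
  rcases S.eq_empty_or_nonempty with rfl | ⟨j₁, hj₁⟩
  · simp [relPoly]
  have hdep : ¬ LinearIndepOn K b S := fun h =>
    hzero j₁ hj₁ (linearIndepOn_finset_iff.1 h c hc j₁ hj₁)
  obtain ⟨T, hTS, hT⟩ : ∃ T ⊂ S, ¬ LinearIndepOn K b T := by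
    simpa [IsCircuitOn, hdep] using hcirc
  obtain ⟨g, hg, j₀, hj₀, hgj₀⟩ : ∃ g : σ → K, ∑ i ∈ T, g i • b i = 0 ∧ ∃ j ∈ T, g j ≠ 0 := by
    simpa [linearIndepOn_finset_iff] using hT
  obtain ⟨j₂, hj₂S, hj₂T⟩ := Finset.exists_of_ssubset hTS
  classical
  -- `g` extended by zero is a relation on `S`; subtracting a multiple of it kills `c j₀`
  set g' : σ → K := fun i => if i ∈ T then g i else 0
  have hg' : ∑ i ∈ S, g' i • b i = 0 := by
    simpa [g', ite_smul, Finset.sum_ite_mem, Finset.inter_eq_right.2 hTS.subset] using hg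
  set s := c j₀ / g j₀
  have hsplit : c = (c - s • g') + s • g' := (sub_add_cancel c _).symm
  rw [hsplit, relPoly_add, relPoly_smul]
  refine add_mem (of_eq_zero _ ?_ j₀ (hTS.subset hj₀) ?_) (Ideal.mul_mem_left _ _
    (of_eq_zero g' hg' j₂ hj₂S (if_neg hj₂T)))
  · simp only [Pi.sub_apply, Pi.smul_apply, sub_smul, smul_assoc, Finset.sum_sub_distrib,
      ← Finset.smul_sum, hc, hg', smul_zero, sub_zero]
  · simp [g', s, hj₀, hgj₀]

theorem map_rename_circuitIdeal_le [DecidableEq τ] (b : τ → V) {f : σ → τ}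
    (hf : Function.Injective f) : (circuitIdeal K (b ∘ f)).map (rename f) ≤ circuitIdeal K b := by
  rw [circuitIdeal, Ideal.map_span, Ideal.span_le]
  rintro _ ⟨_, ⟨S, c, -, hc, rfl⟩, rfl⟩
  rw [rename_relPoly hf S c 0]
  refine relPoly_mem_circuitIdeal ?_
  simpa [Finset.sum_map, hf.extend_apply] using hc

theorem C_inv_mul_X_sub_X_mem_circuitIdeal {b : σ → V} {i j : σ} {β : K} (hj : b j ≠ 0)
    (hβ : b j = β • b i) : C β⁻¹ * X i - X j ∈ circuitIdeal K b := by
  have hβ0 : β ≠ 0 := by rintro rfl; simp [hβ] at hj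
  rcases eq_or_ne i j with rfl | hij
  · have : β = 1 := smul_left_injective K hj (by simpa using hβ.symm)
    simp [this]
  · let c : σ → K := Function.update (fun _ => -1) i β
    have hc : ∑ k ∈ {i, j}, c k • b k = 0 := by
      simp [c, Finset.sum_pair hij, hij.symm, hβ]
    have hmem := Ideal.mul_mem_left _ (-C β⁻¹) (relPoly_mem_circuitIdeal hc)
    convert hmem using 1
    have hpair : relPoly {i, j} c = C β * X j - X i := by
      rw [relPoly, Finset.sum_pair hij, Finset.erase_insert (by simpa using hij),
        Finset.pair_comm, Finset.erase_insert (by simpa using hij.symm)]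
      simp [c, hij.symm, sub_eq_add_neg]
    rw [hpair, mul_sub, ← mul_assoc, neg_mul, ← C_mul, inv_mul_cancel₀ hβ0, C_1]
    ring

theorem exists_X_mul_rename_sub_mem_circuitIdeal [DecidableEq τ] (b : σ → V) {f : τ → σ}
    (hf : Function.Injective f) {i₀ : σ} (hi₀ : ∀ j, f j ≠ i₀) (β : τ → K) {u : MvPolynomial τ K}
    (hu : u ∈ circuitIdeal K fun j => b (f j) - β j • b i₀) :
    ∃ r, X i₀ * rename f u - rename f r ∈ circuitIdeal K b := by
  refine Submodule.span_induction ?_ ⟨0, by simp⟩ ?_ ?_ hu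
  · rintro _ ⟨S, c, -, hc, rfl⟩
    -- with coefficient `-Σ c_j β_j` at `i₀`, `c` is a relation of the original vectors
    set s := ∑ j ∈ S, c j * β j
    have hi₀S : i₀ ∉ S.map ⟨f, hf⟩ := by simp [hi₀]
    let c' := Function.extend f c fun _ => -s
    have hc'i₀ : c' i₀ = -s := Function.extend_apply' _ _ _ fun ⟨j, hj⟩ => hi₀ j hj
    have hc' : ∑ k ∈ insert i₀ (S.map ⟨f, hf⟩), c' k • b k = 0 := by
      rw [Finset.sum_insert hi₀S, Finset.sum_map, hc'i₀]
      simp only [Function.Embedding.coeFn_mk, c', hf.extend_apply]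
      simp only [smul_sub, smul_smul, Finset.sum_sub_distrib, ← Finset.sum_smul] at hc
      rw [neg_smul, ← sub_eq_neg_add, ← hc]
    refine ⟨C s * ∏ j ∈ S, X j, ?_⟩
    have := relPoly_mem_circuitIdeal hc'
    rw [relPoly_insert hi₀S, ← rename_relPoly hf, hc'i₀] at this
    convert this using 1
    simp [Finset.prod_map, sub_eq_add_neg]
  · rintro x y - - ⟨r, hr⟩ ⟨r', hr'⟩
    exact ⟨r + r', by convert add_mem hr hr' using 1; simp only [map_add]; ring⟩
  · rintro a x - ⟨r, hr⟩
    exact ⟨a * r, by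
      convert Ideal.mul_mem_left _ (rename f a) hr using 1; simp only [smul_eq_mul, map_mul]; ring⟩

end Circuits

section Specialization

variable [CommRing K]

theorem _root_.IsLocalization.map_mk'_one {R A L : Type*} [CommRing R] {M : Submonoid R}
    [CommRing A] [Algebra R A] [IsLocalization M A] [Field L] (g : A →+* L) (y : M) :
    g (IsLocalization.mk' A (1 : R) y) = (g (algebraMap R A y))⁻¹ :=
  eq_inv_of_mul_eq_one_left (by rw [← map_mul, IsLocalization.mk'_spec, map_one, map_one])

theorem map_eval₂_aeval {A L : Type*} [CommRing A] [Algebra K A] [CommRing L] [Algebra K L]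
    (g : A →ₐ[K] L) (z : τ → A) (x : A) (Q : Polynomial (MvPolynomial τ K)) :
    g (Q.eval₂ (aeval z).toRingHom x) = Q.eval₂ (aeval (g ∘ z)).toRingHom (g x) := by
  rw [← AlgHom.coe_toRingHom g, Polynomial.hom_eval₂]
  exact congrArg (fun f => Q.eval₂ f (g x)) (congrArg AlgHom.toRingHom (comp_aeval z g))

theorem aeval_leadingCoeff_eq_zero_of_eval₂_reverse {A L L' : Type*} [CommRing A] [Algebra K A]
    [CommRing L] [Algebra K L] [CommRing L'] [Algebra K L'] (g : A →ₐ[K] L)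
    (hg : Function.Injective g) (g' : A →ₐ[K] L') {z : τ → A} {a : A} (ha : g' a = 0)
    {Q : Polynomial (MvPolynomial τ K)}
    (hQ : Q.reverse.eval₂ (aeval (g ∘ z)).toRingHom (g a) = 0) :
    aeval (g' ∘ z) Q.leadingCoeff = 0 := by
  have hE : Q.reverse.eval₂ (aeval z).toRingHom a = 0 :=
    hg (by rw [map_eval₂_aeval, hQ, map_zero])
  have := congrArg g' hE
  rwa [map_eval₂_aeval, ha, map_zero, Polynomial.eval₂_at_zero,
    Polynomial.coeff_zero_reverse] at this

variable {R R' : Type*} [CommRing R] [IsDomain R] [Algebra K R] [CommRing R'] [IsDomain R']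
  [Algebra K R']

theorem aeval_leadingCoeff_eq_zero_of_eval₂_inv (ρ : R →ₐ[K] R') {t : τ → R}
    (ht : ∀ j, ρ (t j) ≠ 0) {s : R} (hs : s ≠ 0) (hρs : ρ s = 0)
    {Q : Polynomial (MvPolynomial τ K)}
    (hQ : Q.eval₂ (aeval fun j => (algebraMap R (FractionRing R) (t j))⁻¹).toRingHom
      (algebraMap R (FractionRing R) s)⁻¹ = 0) :
    aeval (fun j => (algebraMap R' (FractionRing R') (ρ (t j)))⁻¹) Q.leadingCoeff = 0 := by
  -- `ρ` extends to the localization `A` of `R` at the elements that `ρ` does not kill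
  let M : Submonoid R := nonZeroDivisors R ⊓ (nonZeroDivisors R').comap ρ
  let A := Localization M
  have hM : M ≤ nonZeroDivisors R := inf_le_left
  have hMR : ∀ y : M, IsUnit (IsScalarTower.toAlgHom K R (FractionRing R) y) := fun y =>
    IsLocalization.map_units (FractionRing R) ⟨(y : R), hM y.2⟩
  have hMR' : ∀ y : M, IsUnit ((IsScalarTower.toAlgHom K R' (FractionRing R')).comp ρ y) :=
    fun y => IsLocalization.map_units (FractionRing R') ⟨ρ y, Submonoid.mem_comap.1 y.2.2⟩
  let toFrac : A →ₐ[K] FractionRing R := IsLocalization.liftAlgHom hMR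
  let ρFrac : A →ₐ[K] FractionRing R' := IsLocalization.liftAlgHom hMR'
  have hinj : Function.Injective toFrac := by
    rw [show ⇑toFrac = IsLocalization.lift hMR from funext (IsLocalization.liftAlgHom_apply hMR),
      IsLocalization.lift_injective_iff]
    intro x y
    simp [(IsLocalization.injective A hM).eq_iff, (IsFractionRing.injective R _).eq_iff]
  have htM : ∀ j, t j ∈ M := fun j =>
    ⟨mem_nonZeroDivisors_of_ne_zero fun h => ht j (by simp [h]),
      mem_nonZeroDivisors_of_ne_zero (ht j)⟩
  let z : τ → A := fun j => IsLocalization.mk' A 1 ⟨t j, htM j⟩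
  have htoFrac : ∀ r, toFrac (algebraMap R A r) = algebraMap R _ r := fun r => by
    simp [toFrac, IsLocalization.liftAlgHom_apply, IsLocalization.lift_eq]
  have hρFrac : ∀ r, ρFrac (algebraMap R A r) = algebraMap R' _ (ρ r) := fun r => by
    simp [ρFrac, IsLocalization.liftAlgHom_apply, IsLocalization.lift_eq]
  have htoFracz : ⇑toFrac ∘ z = fun j => (algebraMap R (FractionRing R) (t j))⁻¹ :=
    funext fun j => by
      simp only [Function.comp_apply, z, ← AlgHom.coe_toRingHom, IsLocalization.map_mk'_one]
      simp [htoFrac]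
  have hρz : ⇑ρFrac ∘ z = fun j => (algebraMap R' (FractionRing R') (ρ (t j)))⁻¹ :=
    funext fun j => by
      simp only [Function.comp_apply, z, ← AlgHom.coe_toRingHom, IsLocalization.map_mk'_one]
      simp [hρFrac]
  have hsF : algebraMap R (FractionRing R) s ≠ 0 :=
    IsFractionRing.to_map_ne_zero_of_mem_nonZeroDivisors (mem_nonZeroDivisors_of_ne_zero hs)
  let := invertibleOfNonzero (inv_ne_zero hsF)
  rw [← hρz]
  refine aeval_leadingCoeff_eq_zero_of_eval₂_reverse toFrac hinj ρFrac
    (a := algebraMap R A s) (by rw [hρFrac, hρs, map_zero]) ?_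
  rwa [htoFracz, htoFrac, ← inv_inv (algebraMap R _ s), ← invOf_eq_inv,
    Polynomial.eval₂_reverse_eq_zero_iff]

end Specialization

section LinearForms

variable [Field K] [Fintype ι]

def linForm : (ι → K) →ₗ[K] MvPolynomial ι K :=
  Fintype.linearCombination K X

theorem linForm_injective : Function.Injective (linForm : (ι → K) →ₗ[K] MvPolynomial ι K) :=
  (linearIndependent_X ι K).fintypeLinearCombination_injective

theorem algebraMap_linForm_ne_zero {v : ι → K} (hv : v ≠ 0) :
    algebraMap _ (FractionRing (MvPolynomial ι K)) (linForm v) ≠ 0 :=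
  IsFractionRing.to_map_ne_zero_of_mem_nonZeroDivisors
    (mem_nonZeroDivisors_of_ne_zero ((map_ne_zero_iff _ linForm_injective).2 hv))

theorem aeval_linForm (u w v : ι → K) :
    aeval (fun k => X k - w k • linForm u) (linForm v) = linForm (v - (v ⬝ᵥ w) • u) := by
  simp only [linForm, Fintype.linearCombination_apply, map_sum, map_smul, aeval_X, smul_sub,
    Finset.sum_sub_distrib, smul_smul, ← Finset.sum_smul, map_sub, dotProduct]

theorem exists_dotProduct_eq_one {v : ι → K} (hv : v ≠ 0) : ∃ w, v ⬝ᵥ w = 1 := by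
  classical
  obtain ⟨k, hk⟩ := Function.ne_iff.1 hv
  exact ⟨Pi.single k (v k)⁻¹, by rw [dotProduct_single, mul_inv_cancel₀ hk]⟩

def recipHom (b : σ → ι → K) : MvPolynomial σ K →ₐ[K] FractionRing (MvPolynomial ι K) :=
  aeval fun i => (algebraMap _ _ (linForm (b i)))⁻¹

theorem recipHom_X (b : σ → ι → K) (i : σ) :
    recipHom b (X i) = (algebraMap _ _ (linForm (b i)))⁻¹ :=
  aeval_X _ _

theorem recipHom_rename (b : σ → ι → K) (f : τ → σ) (u : MvPolynomial τ K) :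
    recipHom b (rename f u) = recipHom (b ∘ f) u :=
  aeval_rename _ _ _

theorem recipHom_relPoly [DecidableEq σ] {b : σ → ι → K} {S : Finset σ} (hb : ∀ i ∈ S, b i ≠ 0)
    (c : σ → K) :
    recipHom b (relPoly S c) = algebraMap _ _ (linForm (∑ i ∈ S, c i • b i)) *
      ∏ i ∈ S, (algebraMap _ _ (linForm (b i)))⁻¹ := by
  simp only [relPoly, recipHom, map_sum, map_mul, map_prod, aeval_C, aeval_X, map_smul,
    Finset.sum_mul]
  refine Finset.sum_congr rfl fun i hi => ?_
  rw [← Finset.mul_prod_erase _ _ hi, Algebra.smul_def, map_mul, mul_assoc,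
    mul_inv_cancel_left₀ (algebraMap_linForm_ne_zero (hb i hi)), ← IsScalarTower.algebraMap_apply]

theorem circuitIdeal_le_ker_recipHom [DecidableEq σ] {b : σ → ι → K} (hb : ∀ i, b i ≠ 0) :
    circuitIdeal K b ≤ RingHom.ker (recipHom b) := by
  rw [circuitIdeal, Ideal.span_le]
  rintro _ ⟨S, c, -, hc, rfl⟩
  simp [recipHom_relPoly (fun i _ => hb i), hc]

end LinearForms

theorem _root_.MvPolynomial.sub_mem_of_forall_X_sub_mem {R : Type*} [CommRing R]
    {J : Ideal (MvPolynomial σ R)} (g : MvPolynomial σ R →+* MvPolynomial σ R)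
    (hC : ∀ r, g (C r) = C r) (hX : ∀ i, g (X i) - X i ∈ J) (p : MvPolynomial σ R) :
    g p - p ∈ J := by
  have : (Ideal.Quotient.mk J).comp g = Ideal.Quotient.mk J :=
    ringHom_ext (fun r => by simp [hC]) fun i => Ideal.Quotient.eq.2 (hX i)
  exact Ideal.Quotient.eq.1 (RingHom.congr_fun this p)

section Contraction

variable [Field K] [Fintype ι] (b : σ → ι → K) (i₀ : σ) (w : ι → K)

def projAlong (j : σ) : ι → K := b j - (b j ⬝ᵥ w) • b i₀

-- when `b i₀ ⬝ᵥ w = 1`, `projAlong b i₀ w j = 0` exactly when `b j` is parallel to `b i₀`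
abbrev NonParallel : Type _ := {j // projAlong b i₀ w j ≠ 0}

def ofPolynomial : Polynomial (MvPolynomial (NonParallel b i₀ w) K) →+* MvPolynomial σ K :=
  Polynomial.eval₂RingHom (rename Subtype.val).toRingHom (X i₀)

variable {b i₀ w}

theorem projAlong_self (hw : b i₀ ⬝ᵥ w = 1) : projAlong b i₀ w i₀ = 0 := by
  simp [projAlong, hw]

theorem exists_sub_ofPolynomial_mem_circuitIdeal [DecidableEq σ] (hb : ∀ i, b i ≠ 0)
    (p : MvPolynomial σ K) :
    ∃ Q, p - ofPolynomial b i₀ w Q ∈ circuitIdeal K b := by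
  classical
  -- `X_j ≡ β⁻¹ X_{i₀}` modulo the circuit ideal when `b j = β b i₀`
  let θ : MvPolynomial σ K →ₐ[K] Polynomial (MvPolynomial (NonParallel b i₀ w) K) :=
    aeval fun j => if h : projAlong b i₀ w j ≠ 0 then Polynomial.C (X ⟨j, h⟩)
      else Polynomial.C (C (b j ⬝ᵥ w)⁻¹) * Polynomial.X
  refine ⟨θ p, ?_⟩
  rw [← neg_mem_iff, neg_sub]
  refine sub_mem_of_forall_X_sub_mem ((ofPolynomial b i₀ w).comp θ.toRingHom)
    (fun r => by simp [θ, ofPolynomial]) (fun j => ?_) p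
  by_cases h : projAlong b i₀ w j ≠ 0
  · simp [θ, ofPolynomial, h]
  · simp only [RingHom.comp_apply, AlgHom.toRingHom_eq_coe, RingHom.coe_coe, θ, aeval_X,
      dif_neg h, ofPolynomial, Polynomial.coe_eval₂RingHom, Polynomial.eval₂_mul,
      Polynomial.eval₂_C, algHom_C, algebraMap_eq, Polynomial.eval₂_X]
    exact C_inv_mul_X_sub_X_mem_circuitIdeal (hb j) (sub_eq_zero.1 (not_not.1 h))

theorem recipHom_ofPolynomial (Q : Polynomial (MvPolynomial (NonParallel b i₀ w) K)) :
    recipHom b (ofPolynomial b i₀ w Q) =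
      Q.eval₂ (recipHom (b ∘ Subtype.val)).toRingHom (recipHom b (X i₀)) := by
  rw [ofPolynomial, Polynomial.coe_eval₂RingHom, ← AlgHom.coe_toRingHom, Polynomial.hom_eval₂]
  exact congrArg (fun f => Q.eval₂ f _) (RingHom.ext (recipHom_rename b _))

theorem ofPolynomial_mem_circuitIdeal [DecidableEq σ] (hb : ∀ i, b i ≠ 0) (hw : b i₀ ⬝ᵥ w = 1)
    (hdel : RingHom.ker (recipHom (b ∘ Subtype.val : NonParallel b i₀ w → ι → K)) ≤
      circuitIdeal K (b ∘ Subtype.val))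
    (hcon : RingHom.ker (recipHom (projAlong b i₀ w ∘ Subtype.val :
      NonParallel b i₀ w → ι → K)) ≤ circuitIdeal K (projAlong b i₀ w ∘ Subtype.val))
    {Q : Polynomial (MvPolynomial (NonParallel b i₀ w) K)}
    (hQ : recipHom b (ofPolynomial b i₀ w Q) = 0) : ofPolynomial b i₀ w Q ∈ circuitIdeal K b := by
  induction hN : Q.natDegree using Nat.strong_induction_on generalizing Q with
  | _ N ih =>
  rcases N with _ | N
  · rw [Polynomial.eq_C_of_natDegree_le_zero hN.le] at hQ ⊢
    simp only [ofPolynomial, Polynomial.coe_eval₂RingHom, Polynomial.eval₂_C] at hQ ⊢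
    refine map_rename_circuitIdeal_le b Subtype.val_injective (Ideal.mem_map_of_mem _ (hdel ?_))
    exact RingHom.mem_ker.2 ((recipHom_rename _ _ _).symm.trans hQ)
  -- the leading coefficient survives the specialization `ℓ_{i₀} = 0`
  set u := Q.leadingCoeff
  have hQeval := hQ
  rw [recipHom_ofPolynomial, recipHom_X] at hQeval
  have hu : recipHom (projAlong b i₀ w ∘ Subtype.val) u = 0 := by
    have := aeval_leadingCoeff_eq_zero_of_eval₂_inv (aeval fun k => X k - w k • linForm (b i₀))
      (t := fun j : NonParallel b i₀ w => linForm (b j))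
      (fun j => by rw [aeval_linForm]; exact (map_ne_zero_iff _ linForm_injective).2 j.2)
      ((map_ne_zero_iff _ linForm_injective).2 (hb i₀))
      (by rw [aeval_linForm, hw, one_smul, sub_self, map_zero])
      hQeval
    simp only [aeval_linForm] at this
    exact this
  obtain ⟨r, hr⟩ := exists_X_mul_rename_sub_mem_circuitIdeal b Subtype.val_injective
    (fun (j : NonParallel b i₀ w) h => j.2 (by rw [h]; exact projAlong_self hw))
    (fun j => b j ⬝ᵥ w) (hcon hu)
  set Q' := Q.eraseLead + Polynomial.C r * Polynomial.X ^ N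
  have hdiff : ofPolynomial b i₀ w Q - ofPolynomial b i₀ w Q' =
      X i₀ ^ N * (X i₀ * rename Subtype.val u - rename Subtype.val r) := by
    conv_lhs => rw [← Q.eraseLead_add_C_mul_X_pow]
    simp only [ofPolynomial, AlgHom.toRingHom_eq_coe, hN, Polynomial.coe_eval₂RingHom,
      Polynomial.eval₂_add, Polynomial.eval₂_mul, Polynomial.eval₂_C, RingHom.coe_coe,
      Polynomial.eval₂_X_pow, add_sub_add_left_eq_sub, Q', u]
    ring
  have hdiffJ : ofPolynomial b i₀ w Q - ofPolynomial b i₀ w Q' ∈ circuitIdeal K b :=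
    hdiff ▸ Ideal.mul_mem_left _ _ hr
  have hQ' : ofPolynomial b i₀ w Q' ∈ circuitIdeal K b := by
    refine ih _ ?_ ?_ rfl
    · refine Nat.lt_succ_of_le ((Polynomial.natDegree_add_le _ _).trans (max_le ?_ ?_))
      · exact Q.eraseLead_natDegree_le.trans (by omega)
      · exact Polynomial.natDegree_C_mul_X_pow_le r N
    · have := circuitIdeal_le_ker_recipHom hb hdiffJ
      rwa [RingHom.mem_ker, map_sub, hQ, zero_sub, neg_eq_zero] at this
  simpa using add_mem hQ' hdiffJ

end Contraction

theorem ker_recipHom [Field K] [Fintype σ] [DecidableEq σ] [Fintype ι] (b : σ → ι → K)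
    (hb : ∀ i, b i ≠ 0) : RingHom.ker (recipHom b) = circuitIdeal K b := by
  refine le_antisymm ?_ (circuitIdeal_le_ker_recipHom hb)
  induction h : Fintype.card σ using Nat.strong_induction_on generalizing σ with
  | _ n ih =>
  intro p hp
  rcases isEmpty_or_nonempty σ with hσ | ⟨⟨i₀⟩⟩
  · obtain ⟨r, rfl⟩ := C_surjective σ p
    simp_all [recipHom]
  -- delete the vectors parallel to `b i₀`, or contract `b i₀`: both have fewer vectors
  obtain ⟨w, hw⟩ := exists_dotProduct_eq_one (hb i₀)
  classical
  have hcard : Fintype.card (NonParallel b i₀ w) < n :=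
    h ▸ Fintype.card_subtype_lt fun h => h (projAlong_self hw)
  obtain ⟨Q, hQ⟩ := exists_sub_ofPolynomial_mem_circuitIdeal (i₀ := i₀) (w := w) hb p
  have hQ0 : recipHom b (ofPolynomial b i₀ w Q) = 0 := by
    have := circuitIdeal_le_ker_recipHom hb hQ
    rwa [RingHom.mem_ker, map_sub, RingHom.mem_ker.1 hp, zero_sub, neg_eq_zero] at this
  have := ofPolynomial_mem_circuitIdeal hb hw (ih _ hcard _ (fun j => hb j) rfl)
    (ih _ hcard _ (fun j => j.2) rfl) hQ0
  simpa using add_mem this hQ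

end OrlikTerao

theorem phiHom_eq_recipHom {d n : ℕ} (a : Fin n → Fin d → ℂ) :
    phiHom a = (OrlikTerao.recipHom a).toRingHom := by
  refine ringHom_ext (fun r => ?_) fun i => ?_
  · simp only [phiHom, coe_eval₂Hom, eval₂_C, AlgHom.toRingHom_eq_coe, RingHom.coe_coe,
      OrlikTerao.recipHom, aeval_C, RingHom.comp_apply]
    exact (IsScalarTower.algebraMap_apply ℂ (MvPolynomial (Fin d) ℂ) (RatFunField d) r).symm
  · simp only [phiHom, coe_eval₂Hom, eval₂_X, AlgHom.toRingHom_eq_coe, RingHom.coe_coe,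
      OrlikTerao.recipHom_X, ellForm, OrlikTerao.linForm, Fintype.linearCombination_apply,
      smul_eq_C_mul]

theorem isCircuit_iff_isCircuitOn {d n : ℕ} (a : Fin n → Fin d → ℂ) (S : Finset (Fin n)) :
    IsCircuit a S ↔ OrlikTerao.IsCircuitOn ℂ a S :=
  and_congr_right' (forall₂_congr fun _ _ => not_not)

theorem stmt2_general {d n : ℕ} (a : Fin n → Fin d → ℂ)
    (ha : ∀ i, a i ≠ 0) :
    RingHom.ker (phiHom a)
      = Ideal.span {p : MvPolynomial (Fin n) ℂ |
          ∃ (S : Finset (Fin n)) (c : Fin n → ℂ), IsCircuit a S ∧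
            (∑ i ∈ S, c i • a i) = 0 ∧
            p = ∑ i ∈ S, C (c i) * ∏ j ∈ S.erase i, X j} := by
  simp_rw [phiHom_eq_recipHom, isCircuit_iff_isCircuitOn]
  exact OrlikTerao.ker_recipHom a ha

/-- The kernel of `φ : ℂ[e_1,…,e_n] → ℂ(x_1,…,x_d)`, `e_i ↦ ℓ_i⁻¹`, is generated by the
elements `k_{S,c} = Σ_{i∈S} c_i Π_{j∈S∖{i}} e_j`, where `S` ranges over circuits and
`c` over linear relations `Σ_{i∈S} c_i a_i = 0`. -/
theorem stmt2 {d n : ℕ} (a : Fin n → Fin d → ℂ)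
    (ha : ∀ i, a i ≠ 0)
    (hspan : Submodule.span ℂ (Set.range a) = ⊤) :
    RingHom.ker (phiHom a)
      = Ideal.span {p : MvPolynomial (Fin n) ℂ |
          ∃ (S : Finset (Fin n)) (c : Fin n → ℂ), IsCircuit a S ∧
            (∑ i ∈ S, c i • a i) = 0 ∧
            p = ∑ i ∈ S, C (c i) * ∏ j ∈ S.erase i, X j} :=
  stmt2_general a ha
end
end

section
/- Let a_1,…,a_n be nonzero vectors spanning ℂ^d, let φ : ℂ[e_1,…,e_n] → ℂ(x_1,…,x_d) be the ℂ-algebra homomorphism sending e_i to ℓ_i^{-1} where ℓ_i = Σ_j (a_i)_j x_j, and let I(𝒜) = ker φ. For any linear order σ on {1,…,n}, let bc_σ(Δ_𝒜) be the σ-broken circuit complex of the configuration, and let I_{bc_σ(Δ_𝒜)} ⊆ ℂ[e_1,…,e_n] be its Stanley–Reisner ideal, generated by the monomials Π_{i∈S} e_i over subsets S not in bc_σ(Δ_𝒜). Then for every m ≥ 0, dim_ℂ( ℂ[e]_m / (I(𝒜) ∩ ℂ[e]_m) ) = dim_ℂ( ℂ[e]_m / (I_{bc_σ(Δ_𝒜)}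 ∩ ℂ[e]_m) ), where ℂ[e]_m denotes the homogeneous polynomials of degree m; in particular the Hilbert function of R(𝒜) = ℂ[e_1,…,e_n]/I(𝒜) coincides with that of the Stanley–Reisner ring of bc_σ(Δ_𝒜) for every order σ. -/
open scoped BigOperators

noncomputable section

open MvPolynomial

/-- `T` is a face of the `σ`-broken circuit complex: `T` contains no `σ`-broken circuit
(a circuit minus its `σ`-smallest element). -/
def BCFace {d n : ℕ} (a : Fin n → Fin d → ℂ) (σ : LinearOrder (Fin n))
    (T : Finset (Fin n)) : Prop :=
  ¬ ∃ (S : Finset (Fin n)) (i : Fin n), IsCircuit a S ∧ i ∈ S ∧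
      (∀ j ∈ S, σ.le i j) ∧ S.erase i ⊆ T

/-- The Stanley–Reisner ideal of the `σ`-broken circuit complex. -/
def bcIdeal {d n : ℕ} (a : Fin n → Fin d → ℂ) (σ : LinearOrder (Fin n)) :
    Ideal (MvPolynomial (Fin n) ℂ) :=
  Ideal.span {p | ∃ T : Finset (Fin n), ¬ BCFace a σ T ∧
    p = ∏ i ∈ T, (X i : MvPolynomial (Fin n) ℂ)}

/-- The dimension of the degree-`m` graded piece of `ℂ[e_1,…,e_n]/I`. -/
def gradedDim {n : ℕ} (I : Ideal (MvPolynomial (Fin n) ℂ)) (m : ℕ) : ℕ :=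
  Module.finrank ℂ
    (↥(homogeneousSubmodule (Fin n) ℂ m) ⧸
      (Submodule.comap (homogeneousSubmodule (Fin n) ℂ m).subtype (I.restrictScalars ℂ)))

/-!
Both sides equal the number of degree-`m` monomials `e^α` whose support is a face of the
`σ`-broken circuit complex (nbc monomials): for the Stanley–Reisner ideal these monomials are a
basis of the quotient, and for `I(𝒜)` their images `ℓ^{-α}` are a basis of the degree-`m` part
of `R(𝒜)`.

Spanning: if `supp α` contains the broken circuit `S \ {i₀}` of a circuit `S`, the relation
`Σ_{i ∈ S} c_i ℓ_i = 0` divided by `ℓ_{i₀} ℓ^α` expresses `ℓ^{-α}` through monomials in which a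
factor `ℓ_i⁻¹` is traded for `ℓ_{i₀}⁻¹`, with `i₀` `σ`-smaller than `i`.

Independence, by induction on a ground set `E`: let `z` be its `σ`-largest element. If no
monomial of a relation involves `z`, delete `z`. Otherwise clear denominators and restrict to the
hyperplane `ℓ_z = 0`, realised by a linear map `π` with kernel `ℂ a_z`: only the terms with the
highest power of `ℓ_z⁻¹` survive, and they form a relation among nbc monomials of the
contraction `π ∘ a` on `E \ {z}`, because nbc sets containing `z` contract to nbc sets.
-/

namespace Finsupp

theorem indicator_one_le_iff {ι : Type*} {T : Finset ι} {β : ι →₀ ℕ} :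
    indicator T (fun _ _ => 1) ≤ β ↔ T ⊆ β.support := by
  classical
  simp only [Finsupp.le_def, indicator_apply, Finset.subset_iff, mem_support_iff]
  refine forall_congr' fun i => ?_
  by_cases hi : i ∈ T <;> simp [hi, Nat.one_le_iff_ne_zero]

theorem finset_sup_apply {ι κ : Type*} (s : Finset κ) (f : κ → ι →₀ ℕ) (i : ι) :
    s.sup f i = s.sup fun x => f x i :=
  Finset.apply_sup_eq_sup_comp (fun g : ι →₀ ℕ => g i) (fun _ _ => rfl) rfl

theorem support_finset_sup {ι κ : Type*} [DecidableEq ι] (s : Finset κ) (f : κ → ι →₀ ℕ) :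
    (s.sup f).support = s.biUnion fun x => (f x).support := by
  classical
  induction s using Finset.induction_on with
  | empty => rfl
  | insert x s _ ih => rw [Finset.sup_insert, support_sup, ih, Finset.biUnion_insert]

theorem single_one_le_of_mem_support {ι : Type*} {f : ι →₀ ℕ} {i : ι} (h : i ∈ f.support) :
    single i 1 ≤ f :=
  single_le_iff.mpr (Nat.one_le_iff_ne_zero.mpr (mem_support_iff.mp h))

theorem injOn_erase {ι M : Type*} [AddZeroClass M] (z : ι) (k : M) :
    Set.InjOn (erase z) {f : ι →₀ M | f z = k} := fun f hf g hg h => by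
  rw [← erase_add_single z f, ← erase_add_single z g, h, hf, hg]

end Finsupp

theorem LinearIndepOn.comp_of_ker_eq_span {ι K V : Type*} [DivisionRing K] [AddCommGroup V]
    [Module K V] {v : ι → V} {π : V →ₗ[K] V} {s : Set ι} {z : ι} (hπ : LinearMap.ker π = K ∙ v z)
    (hz : z ∉ s) (h : LinearIndepOn K v (insert z s)) : LinearIndepOn K (π ∘ v) s := by
  obtain ⟨hs, hzs⟩ := (linearIndepOn_insert hz).mp h
  refine hs.map ?_
  rw [← Set.image_eq_range, hπ]
  exact Submodule.disjoint_span_singleton_of_notMem hzs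

namespace MvPolynomial

variable {ι R : Type*} [CommSemiring R]

theorem prod_X_eq_monomial_indicator (T : Finset ι) :
    ∏ i ∈ T, (X i : MvPolynomial ι R) = monomial (Finsupp.indicator T fun _ _ => 1) 1 := by
  simpa using prod_X_pow (R := R) (fun _ => 1) T

theorem mem_span_prod_X_iff {P : Finset ι → Prop} (hP : ∀ ⦃S T⦄, S ⊆ T → P T → P S)
    {p : MvPolynomial ι R} :
    p ∈ Ideal.span {q | ∃ T, ¬ P T ∧ q = ∏ i ∈ T, X i} ↔ ∀ β ∈ p.support, ¬ P β.support := by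
  have hset : {q : MvPolynomial ι R | ∃ T, ¬ P T ∧ q = ∏ i ∈ T, X i} =
      (fun s => monomial s 1) '' ((fun T => Finsupp.indicator T fun _ _ => 1) '' {T | ¬ P T}) := by
    ext q
    simp [prod_X_eq_monomial_indicator, eq_comm]
  rw [hset, mem_ideal_span_monomial_image]
  refine forall₂_congr fun β _ => ?_
  simp only [Set.mem_image, Set.mem_ofPred_eq, exists_exists_and_eq_and,
    Finsupp.indicator_one_le_iff]
  exact ⟨fun ⟨T, hT, hTβ⟩ hβ => hT (hP hTβ hβ), fun hβ => ⟨_, hβ, subset_rfl⟩⟩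

end MvPolynomial

theorem gradedDim_eq_finrank_range {n m : ℕ} {I : Ideal (MvPolynomial (Fin n) ℂ)} {V : Type*}
    [AddCommGroup V] [Module ℂ V] (Ψ : homogeneousSubmodule (Fin n) ℂ m →ₗ[ℂ] V)
    (hΨ : ∀ p, Ψ p = 0 ↔ (p : MvPolynomial (Fin n) ℂ) ∈ I) :
    gradedDim I m = Module.finrank ℂ (LinearMap.range Ψ) := by
  have hker : LinearMap.ker Ψ =
      (I.restrictScalars ℂ).comap (homogeneousSubmodule (Fin n) ℂ m).subtype := by
    ext p
    simp [hΨ]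
  rw [gradedDim, ← hker]
  exact Ψ.quotKerEquivRange.finrank_eq

def faceMonomials {ι : Type*} (P : Finset ι → Prop) (m : ℕ) : Set (ι →₀ ℕ) :=
  {β | P β.support ∧ β.degree = m}

theorem faceMonomials_finite {ι : Type*} [Finite ι] (P : Finset ι → Prop) (m : ℕ) :
    (faceMonomials P m).Finite :=
  (Finsupp.finite_of_degree_le m).subset fun _ hβ => hβ.2.le

theorem gradedDim_span_prod_X {n : ℕ} {P : Finset (Fin n) → Prop}
    (hP : ∀ ⦃S T⦄, S ⊆ T → P T → P S) (m : ℕ) :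
    gradedDim (Ideal.span {q | ∃ T, ¬ P T ∧ q = ∏ i ∈ T, X i}) m =
      Nat.card (faceMonomials P m) := by
  have := (faceMonomials_finite P m).fintype
  set HS := homogeneousSubmodule (Fin n) ℂ m
  let Ψ : HS →ₗ[ℂ] faceMonomials P m → ℂ :=
    LinearMap.pi fun β => lcoeff ℂ β.1 ∘ₗ HS.subtype
  have hΨ : ∀ p, Ψ p = 0 ↔
      (p : MvPolynomial (Fin n) ℂ) ∈ Ideal.span {q | ∃ T, ¬ P T ∧ q = ∏ i ∈ T, X i} := by
    rintro ⟨p, hp⟩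
    rw [mem_span_prod_X_iff hP, funext_iff]
    refine ⟨fun h β hβ hface => mem_support_iff.mp hβ
      (h ⟨β, hface, not_imp_comm.mp hp.coeff_eq_zero (mem_support_iff.mp hβ)⟩),
      fun h β => notMem_support_iff.mp fun hβ => h β hβ β.2.1⟩
  have hsurj : Function.Surjective Ψ := by
    intro g
    refine ⟨⟨∑ β, g β • monomial β.1 1, Submodule.sum_mem _ fun β _ =>
      Submodule.smul_mem _ _ (isHomogeneous_monomial _ β.2.2)⟩, funext fun β => ?_⟩
    simp [Ψ, coeff_monomial, ← Subtype.ext_iff]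
  rw [gradedDim_eq_finrank_range Ψ hΨ, LinearMap.range_eq_top.mpr hsurj, finrank_top,
    Module.finrank_fintype_fun_eq_card, Nat.card_eq_fintype_card]

section Configuration

variable {d n : ℕ} {a : Fin n → Fin d → ℂ}

theorem exists_isCircuit_subset {S : Finset (Fin n)} (h : DepSet a S) :
    ∃ C ⊆ S, IsCircuit a C := by
  induction S using Finset.strongInduction with
  | H S ih =>
    by_cases hmin : ∃ T ⊂ S, DepSet a T
    · obtain ⟨T, hTS, hT⟩ := hmin
      obtain ⟨C, hCT, hC⟩ := ih T hTS hT
      exact ⟨C, hCT.trans hTS.subset, hC⟩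
    · exact ⟨S, subset_rfl, h, fun T hTS hT => hmin ⟨T, hTS, hT⟩⟩

theorem IsCircuit.nonempty {S : Finset (Fin n)} (h : IsCircuit a S) : S.Nonempty := by
  rw [Finset.nonempty_iff_ne_empty]
  rintro rfl
  exact h.1 (by simp)

theorem IsCircuit.exists_relation {S : Finset (Fin n)} (h : IsCircuit a S) :
    ∃ c : Fin n → ℂ, ∑ i ∈ S, c i • a i = 0 ∧ ∀ i ∈ S, c i ≠ 0 := by
  obtain ⟨c, hc, i, hi, hci⟩ := not_linearIndepOn_finset_iff.mp h.1
  refine ⟨c, hc, ?_⟩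
  by_contra! hzero
  obtain ⟨j, hj, hcj⟩ := hzero
  refine h.2 (S.filter (c · ≠ 0)) (Finset.filter_ssubset.mpr ⟨j, hj, not_not.mpr hcj⟩) ?_
  refine not_linearIndepOn_finset_iff.mpr ⟨c, ?_, i, Finset.mem_filter.mpr ⟨hi, hci⟩, hci⟩
  rwa [Finset.sum_filter_of_ne fun k _ hk => left_ne_zero_of_smul hk]

theorem BCFace.subset {σ : LinearOrder (Fin n)} {T T' : Finset (Fin n)} (hT : T' ⊆ T)
    (h : BCFace a σ T) : BCFace a σ T' :=
  fun ⟨S, i, hS, hi, hmin, hST⟩ => h ⟨S, i, hS, hi, hmin, hST.trans hT⟩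

def BCFaceOn (a : Fin n → Fin d → ℂ) (σ : LinearOrder (Fin n)) (E T : Finset (Fin n)) : Prop :=
  ¬ ∃ (S : Finset (Fin n)) (i : Fin n), S ⊆ E ∧ IsCircuit a S ∧ i ∈ S ∧
      (∀ j ∈ S, σ.le i j) ∧ S.erase i ⊆ T

theorem bcFaceOn_univ {σ : LinearOrder (Fin n)} {T : Finset (Fin n)} :
    BCFaceOn a σ Finset.univ T ↔ BCFace a σ T :=
  ⟨fun h ⟨S, i, hS⟩ => h ⟨S, i, S.subset_univ, hS⟩, fun h ⟨S, i, _, hS⟩ => h ⟨S, i, hS⟩⟩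

theorem BCFaceOn.of_subset {σ : LinearOrder (Fin n)} {E E' T : Finset (Fin n)} (hE : E' ⊆ E)
    (h : BCFaceOn a σ E T) : BCFaceOn a σ E' T :=
  fun ⟨S, i, hSE, hS⟩ => h ⟨S, i, hSE.trans hE, hS⟩

/-- A circuit `C ⊆ insert z S` would have `C.erase (min C) ⊆ T`: if `i ∈ C`, then `i` is the
`σ`-smallest element of `C`, `z` being `σ`-largest. -/
theorem BCFaceOn.linearIndepOn_insert {σ : LinearOrder (Fin n)} {E T S : Finset (Fin n)}
    {z i : Fin n} (hface : BCFaceOn a σ E T) (hzT : z ∈ T) (hzmax : ∀ j ∈ E, σ.le j z)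
    (hSE : insert z S ⊆ E) (hmin : ∀ j ∈ S, σ.le i j) (hST : S.erase i ⊆ T) :
    LinearIndepOn ℂ a (insert z S : Finset (Fin n)) := by
  by_contra hdep
  obtain ⟨C, hCS, hC⟩ := exists_isCircuit_subset hdep
  obtain ⟨m, hmC, hmmin⟩ : ∃ m ∈ C, ∀ j ∈ C, σ.le m j := by
    let := σ
    exact C.exists_min_image id hC.nonempty
  refine hface ⟨C, m, hCS.trans hSE, hC, hmC, hmmin, fun x hx => ?_⟩
  obtain ⟨hxm, hxC⟩ := Finset.mem_erase.mp hx
  rcases Finset.mem_insert.mp (hCS hxC) with rfl | hxS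
  · exact hzT
  · refine hST (Finset.mem_erase.mpr ⟨fun hxi => hxm ?_, hxS⟩)
    subst hxi
    refine σ.le_antisymm _ _ ?_ (hmmin x hxC)
    rcases Finset.mem_insert.mp (hCS hmC) with rfl | hmS
    · exact hzmax x (hSE (Finset.mem_insert_of_mem hxS))
    · exact hmin m hmS

end Configuration

section Contraction

variable {d n : ℕ} {a : Fin n → Fin d → ℂ} {σ : LinearOrder (Fin n)} {E T : Finset (Fin n)}
  {z : Fin n} {π : (Fin d → ℂ) →ₗ[ℂ] (Fin d → ℂ)}

theorem BCFaceOn.apply_ne_zero_of_ker_eq (hface : BCFaceOn a σ E T) (hzT : z ∈ T)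
    (hzE : z ∈ E) (hzmax : ∀ j ∈ E, σ.le j z) (hπ : LinearMap.ker π = ℂ ∙ a z) {i : Fin n}
    (hi : i ∈ E.erase z) : π (a i) ≠ 0 := by
  obtain ⟨hiz, hiE⟩ := Finset.mem_erase.mp hi
  have hind := hface.linearIndepOn_insert (i := i) hzT hzmax
    (Finset.insert_subset hzE (Finset.singleton_subset_iff.mpr hiE))
    (fun j hj => Finset.mem_singleton.mp hj ▸ σ.le_refl i) (by simp)
  rw [Finset.coe_insert, Finset.coe_singleton] at hind
  exact (hind.comp_of_ker_eq_span hπ (Set.mem_singleton_iff.not.mpr hiz.symm)).ne_zero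
    (Set.mem_singleton i)

theorem BCFaceOn.contract (hface : BCFaceOn a σ E T) (hzT : z ∈ T) (hzE : z ∈ E)
    (hzmax : ∀ j ∈ E, σ.le j z) (hπ : LinearMap.ker π = ℂ ∙ a z) :
    BCFaceOn (π ∘ a) σ (E.erase z) (T.erase z) := by
  rintro ⟨S, i, hSE, hS, -, hmin, hST⟩
  have hzS : z ∉ S := fun h => (Finset.mem_erase.mp (hSE h)).1 rfl
  have hind := hface.linearIndepOn_insert hzT hzmax
    (Finset.insert_subset hzE (hSE.trans (E.erase_subset z))) hmin
    (hST.trans (T.erase_subset z))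
  rw [Finset.coe_insert] at hind
  exact hS.1 (hind.comp_of_ker_eq_span hπ hzS)

def nbcOn (a : Fin n → Fin d → ℂ) (σ : LinearOrder (Fin n)) (E : Finset (Fin n)) :
    Set (Fin n →₀ ℕ) :=
  {α | α.support ⊆ E ∧ BCFaceOn a σ E α.support}

theorem nbcOn_empty : nbcOn a σ ∅ ⊆ {0} := fun _ hα =>
  Finsupp.support_eq_empty.mp (Finset.subset_empty.mp hα.1)

theorem mem_nbcOn_erase {α : Fin n →₀ ℕ} (hα : α ∈ nbcOn a σ E) (hz : α z = 0) :
    α ∈ nbcOn a σ (E.erase z) :=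
  ⟨fun _ hi => Finset.mem_erase.mpr ⟨fun h => Finsupp.mem_support_iff.mp hi (h ▸ hz), hα.1 hi⟩,
    hα.2.of_subset (E.erase_subset z)⟩

theorem erase_mem_nbcOn_contract {α : Fin n →₀ ℕ} (hα : α ∈ nbcOn a σ E) (hz : α z ≠ 0)
    (hzE : z ∈ E) (hzmax : ∀ j ∈ E, σ.le j z) (hπ : LinearMap.ker π = ℂ ∙ a z) :
    α.erase z ∈ nbcOn (π ∘ a) σ (E.erase z) := by
  rw [nbcOn, Set.mem_ofPred_eq, Finsupp.support_erase]
  exact ⟨Finset.erase_subset_erase z hα.1,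
    hα.2.contract (Finsupp.mem_support_iff.mpr hz) hzE hzmax hπ⟩

end Contraction

section LinearForms

variable {d n : ℕ} {a : Fin n → Fin d → ℂ}

def linForm : (Fin d → ℂ) →ₗ[ℂ] MvPolynomial (Fin d) ℂ :=
  Fintype.linearCombination ℂ X

theorem linForm_injective : Function.Injective (linForm (d := d)) :=
  linearIndependent_iff_injective_fintypeLinearCombination.mp (linearIndependent_X (Fin d) ℂ)

theorem ellForm_eq (a : Fin n → Fin d → ℂ) (i : Fin n) :
    ellForm a i = algebraMap _ (RatFunField d) (linForm (a i)) := by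
  simp [ellForm, linForm, Fintype.linearCombination_apply, smul_eq_C_mul]

theorem ellForm_ne_zero {i : Fin n} (h : a i ≠ 0) : ellForm a i ≠ 0 := by
  rw [ellForm_eq, map_ne_zero_iff _ (IsFractionRing.injective _ _)]
  exact (map_ne_zero_iff _ linForm_injective).mpr h

theorem sum_smul_ellForm (S : Finset (Fin n)) (c : Fin n → ℂ) :
    ∑ i ∈ S, c i • ellForm a i =
      algebraMap _ (RatFunField d) (linForm (∑ i ∈ S, c i • a i)) := by
  simp only [ellForm_eq, map_sum, map_smul, algebraMap.coe_smul]

theorem aeval_linForm (π : (Fin d → ℂ) →ₗ[ℂ] (Fin d → ℂ)) (v : Fin d → ℂ) :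
    aeval (fun j => linForm (π (Pi.single j 1))) (linForm v) = linForm (π v) := by
  have : (aeval fun j => linForm (π (Pi.single j 1))).toLinearMap ∘ₗ linForm =
      linForm ∘ₗ π := by
    ext j : 2
    simp [linForm]
  exact LinearMap.congr_fun this v

def invProd (a : Fin n → Fin d → ℂ) (α : Fin n →₀ ℕ) : RatFunField d :=
  α.prod fun i k => (ellForm a i)⁻¹ ^ k

def linProd (a : Fin n → Fin d → ℂ) (α : Fin n →₀ ℕ) : MvPolynomial (Fin d) ℂ :=
  α.prod fun i k => linForm (a i) ^ k

def phiAlg (a : Fin n → Fin d → ℂ) : MvPolynomial (Fin n) ℂ →ₐ[ℂ] RatFunField d :=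
  aeval fun i => (ellForm a i)⁻¹

theorem phiHom_apply (p : MvPolynomial (Fin n) ℂ) : phiHom a p = phiAlg a p := by
  rw [phiHom, phiAlg, coe_eval₂Hom, aeval_def,
    IsScalarTower.algebraMap_eq ℂ (MvPolynomial (Fin d) ℂ) (RatFunField d)]

theorem phiAlg_monomial_one (α : Fin n →₀ ℕ) : phiAlg a (monomial α 1) = invProd a α := by
  rw [phiAlg, aeval_monomial, map_one, one_mul, invProd]

theorem invProd_zero : invProd a 0 = 1 := Finsupp.prod_zero_index

theorem invProd_add_single (α : Fin n →₀ ℕ) (i : Fin n) (k : ℕ) :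
    invProd a (α + Finsupp.single i k) = invProd a α * (ellForm a i)⁻¹ ^ k := by
  rw [invProd, Finsupp.prod_add_index' (fun _ => pow_zero _) (fun _ _ _ => pow_add _ _ _),
    Finsupp.prod_single_index (h := fun i k => (ellForm a i)⁻¹ ^ k) (pow_zero _), invProd]

theorem linProd_add (α β : Fin n →₀ ℕ) : linProd a (α + β) = linProd a α * linProd a β :=
  Finsupp.prod_add_index' (fun _ => pow_zero _) fun _ _ _ => pow_add _ _ _

theorem algebraMap_linProd_mul_invProd {α : Fin n →₀ ℕ} (h : ∀ i ∈ α.support, a i ≠ 0) :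
    algebraMap _ (RatFunField d) (linProd a α) * invProd a α = 1 := by
  rw [linProd, invProd, map_finsuppProd, ← Finsupp.prod_mul]
  refine Finset.prod_eq_one fun i hi => ?_
  beta_reduce
  rw [map_pow, ← ellForm_eq, ← mul_pow, mul_inv_cancel₀ (ellForm_ne_zero (h i hi)), one_pow]

theorem linProd_ne_zero {α : Fin n →₀ ℕ} (h : ∀ i ∈ α.support, a i ≠ 0) : linProd a α ≠ 0 :=
  Finset.prod_ne_zero_iff.mpr fun i hi =>
    pow_ne_zero _ ((map_ne_zero_iff _ linForm_injective).mpr (h i hi))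

theorem linProd_eq_zero {α : Fin n →₀ ℕ} {z : Fin n} (ha : a z = 0) (hz : α z ≠ 0) :
    linProd a α = 0 :=
  Finset.prod_eq_zero (Finsupp.mem_support_iff.mpr hz) (by simp [ha, hz])

theorem algebraMap_linProd_tsub {β μ : Fin n →₀ ℕ} (hle : β ≤ μ)
    (h : ∀ i ∈ μ.support, a i ≠ 0) :
    algebraMap _ (RatFunField d) (linProd a (μ - β)) =
      algebraMap _ _ (linProd a μ) * invProd a β := by
  conv_rhs => rw [← tsub_add_cancel_of_le hle, linProd_add, map_mul, mul_assoc,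
    algebraMap_linProd_mul_invProd fun i hi => h i (Finsupp.support_mono hle hi), mul_one]

theorem sum_smul_invProd_eq_zero_iff {ι : Type*} {s : Finset ι} {c : ι → ℂ}
    {α : ι → Fin n →₀ ℕ} {μ : Fin n →₀ ℕ} (hle : ∀ x ∈ s, α x ≤ μ)
    (h : ∀ i ∈ μ.support, a i ≠ 0) :
    ∑ x ∈ s, c x • invProd a (α x) = 0 ↔ ∑ x ∈ s, c x • linProd a (μ - α x) = 0 := by
  have hinj := IsFractionRing.injective (MvPolynomial (Fin d) ℂ) (RatFunField d)
  rw [← (map_eq_zero_iff _ hinj), map_sum, ← mul_eq_zero_iff_left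
    ((map_ne_zero_iff _ hinj).mpr (linProd_ne_zero h)), Finset.mul_sum]
  refine Eq.congr_left (Finset.sum_congr rfl fun x hx => ?_)
  rw [mul_smul_comm, ← algebraMap_linProd_tsub (hle x hx) h]
  exact (algebraMap.coe_smul _ _ _).symm

theorem aeval_linProd (π : (Fin d → ℂ) →ₗ[ℂ] (Fin d → ℂ)) (α : Fin n →₀ ℕ) :
    aeval (fun j => linForm (π (Pi.single j 1))) (linProd a α) = linProd (π ∘ a) α := by
  simp only [linProd, map_finsuppProd, map_pow, aeval_linForm, Function.comp_apply]

end LinearForms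

section Spanning

variable {d n : ℕ} {a : Fin n → Fin d → ℂ}

theorem invProd_eq_sum_of_relation {S : Finset (Fin n)} {i₀ : Fin n} {c : Fin n → ℂ}
    {α : Fin n →₀ ℕ} (hrel : ∑ i ∈ S, c i • a i = 0) (hi₀ : i₀ ∈ S) (hc : c i₀ ≠ 0)
    (ha : ∀ i ∈ S, a i ≠ 0) (hα : S.erase i₀ ⊆ α.support) :
    invProd a α = ∑ i ∈ S.erase i₀,
      (-(c i₀)⁻¹ * c i) • invProd a (α - Finsupp.single i 1 + Finsupp.single i₀ 1) := by
  have hℓ : ∑ i ∈ S.erase i₀, c i • ellForm a i = -(c i₀ • ellForm a i₀) := by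
    have h := sum_smul_ellForm (a := a) S c
    rw [hrel, map_zero, map_zero, ← Finset.add_sum_erase S _ hi₀] at h
    exact eq_neg_of_add_eq_zero_right h
  have hterm : ∀ i ∈ S.erase i₀, invProd a (α - Finsupp.single i 1 + Finsupp.single i₀ 1) =
      invProd a α * ellForm a i * (ellForm a i₀)⁻¹ := by
    intro i hi
    conv_rhs => rw [← tsub_add_cancel_of_le (Finsupp.single_one_le_of_mem_support (hα hi)),
      invProd_add_single]
    rw [invProd_add_single, pow_one, pow_one,
      inv_mul_cancel_right₀ (ellForm_ne_zero (ha i (Finset.mem_of_mem_erase hi)))]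
  rw [Finset.sum_congr rfl fun i hi => by rw [hterm i hi]]
  simp only [Algebra.smul_def, map_mul, map_neg, map_inv₀] at hℓ ⊢
  calc invProd a α = (-(algebraMap ℂ (RatFunField d) (c i₀))⁻¹ * invProd a α * (ellForm a i₀)⁻¹) *
        -(algebraMap ℂ (RatFunField d) (c i₀) * ellForm a i₀) := by
          field_simp [(map_ne_zero _).mpr hc, ellForm_ne_zero (ha i₀ hi₀)]
    _ = _ := by
      rw [← hℓ, Finset.mul_sum]
      exact Finset.sum_congr rfl fun i _ => by ring

def rankOf (σ : LinearOrder (Fin n)) (i : Fin n) : ℕ :=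
  (Finset.univ.filter fun j => σ.lt j i).card

theorem rankOf_lt_rankOf {σ : LinearOrder (Fin n)} {i j : Fin n} (h : σ.lt i j) :
    rankOf σ i < rankOf σ j := by
  refine Finset.card_lt_card (Finset.ssubset_iff_of_subset (fun k hk => ?_) |>.mpr ⟨i, ?_, ?_⟩)
  · simp only [Finset.mem_filter, Finset.mem_univ, true_and] at hk ⊢
    exact @lt_trans _ σ.toPreorder _ _ _ hk h
  · simp [h]
  · simp

/-- Induction on the weight `Σ α_i · rankOf σ i`, which drops when a factor `ℓ_i⁻¹` is traded
for `ℓ_{i₀}⁻¹` with `i₀` `σ`-smaller. -/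
theorem invProd_mem_span_faceMonomials (ha : ∀ i, a i ≠ 0) (σ : LinearOrder (Fin n))
    (α : Fin n →₀ ℕ) :
    invProd a α ∈ Submodule.span ℂ (invProd a '' faceMonomials (BCFace a σ) α.degree) := by
  induction hw : Finsupp.weight (rankOf σ) α using Nat.strong_induction_on generalizing α with
  | _ w ih =>
  by_cases hface : BCFace a σ α.support
  · exact Submodule.subset_span ⟨α, ⟨hface, rfl⟩, rfl⟩
  obtain ⟨S, i₀, hS, hi₀, hmin, hSα⟩ := not_not.mp hface
  obtain ⟨c, hrel, hc⟩ := hS.exists_relation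
  rw [invProd_eq_sum_of_relation hrel hi₀ (hc i₀ hi₀) (fun i _ => ha i) hSα]
  refine Submodule.sum_mem _ fun i hi => Submodule.smul_mem _ _ ?_
  obtain ⟨hii₀, hiS⟩ := Finset.mem_erase.mp hi
  obtain ⟨γ, rfl⟩ : ∃ γ, α = γ + Finsupp.single i 1 :=
    ⟨α - Finsupp.single i 1,
      (tsub_add_cancel_of_le (Finsupp.single_one_le_of_mem_support (hSα hi))).symm⟩
  have hlt : rankOf σ i₀ < rankOf σ i :=
    rankOf_lt_rankOf (@lt_of_le_of_ne _ σ.toPartialOrder _ _ (hmin i hiS) (Ne.symm hii₀))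
  have hw' : Finsupp.weight (rankOf σ) (γ + Finsupp.single i₀ 1) < w := by
    simpa [← hw, Finsupp.weight_single] using hlt
  have hdeg : (γ + Finsupp.single i₀ 1).degree = (γ + Finsupp.single i 1).degree := by
    simp only [map_add, Finsupp.degree_single]
  rw [add_tsub_cancel_right, ← hdeg]
  exact ih _ hw' _ rfl

end Spanning

section Independence

variable {d n : ℕ} {a : Fin n → Fin d → ℂ}

/-- On the hyperplane `ℓ_z = 0` the cleared relation loses every term with `α z < μ z`. -/
theorem sum_smul_invProd_contract_eq_zero {π : (Fin d → ℂ) →ₗ[ℂ] (Fin d → ℂ)} {z : Fin n}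
    (hπ : π (a z) = 0) {s : Finset (Fin n →₀ ℕ)} {c : (Fin n →₀ ℕ) → ℂ} {μ : Fin n →₀ ℕ}
    (hle : ∀ α ∈ s, α ≤ μ) (ha : ∀ i ∈ μ.support, a i ≠ 0)
    (hb : ∀ i ∈ μ.support.erase z, π (a i) ≠ 0) (h : ∑ α ∈ s, c α • invProd a α = 0) :
    ∑ α ∈ s with α z = μ z, c α • invProd (π ∘ a) (α.erase z) = 0 := by
  have hle' : ∀ α ∈ s.filter (· z = μ z), α.erase z ≤ μ.erase z := fun α hα i => by
    by_cases hi : i = z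
    · simp [hi]
    · simpa [Finsupp.erase_ne hi] using hle α (Finset.mem_filter.mp hα).1 i
  rw [sum_smul_invProd_eq_zero_iff hle' (by simpa [Finsupp.support_erase] using hb)]
  have hsub := congrArg (aeval fun j => linForm (π (Pi.single j 1)))
    ((sum_smul_invProd_eq_zero_iff hle ha).mp h)
  rw [map_sum, map_zero] at hsub
  rw [← hsub, Finset.sum_filter]
  refine Finset.sum_congr rfl fun α hα => ?_
  rw [map_smul, aeval_linProd]
  split_ifs with hαz
  · congr 2
    ext i
    by_cases hi : i = z
    · simp [hi, hαz]
    · simp [Finsupp.erase_ne hi]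
  · rw [linProd_eq_zero (z := z) hπ, smul_zero]
    rw [Finsupp.tsub_apply]
    exact Nat.sub_ne_zero_of_lt (lt_of_le_of_ne (hle α hα z) hαz)

theorem LinearIndepOn.comp_erase_of_nbcOn {σ : LinearOrder (Fin n)} {E : Finset (Fin n)}
    {z : Fin n} {π : (Fin d → ℂ) →ₗ[ℂ] (Fin d → ℂ)}
    (h : LinearIndepOn ℂ (invProd (π ∘ a)) (nbcOn (π ∘ a) σ (E.erase z))) (hzE : z ∈ E)
    (hzmax : ∀ j ∈ E, σ.le j z) (hπ : LinearMap.ker π = ℂ ∙ a z) {k : ℕ} (hk : k ≠ 0)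
    {s : Set (Fin n →₀ ℕ)} (hs : ∀ α ∈ s, α ∈ nbcOn a σ E ∧ α z = k) :
    LinearIndepOn ℂ (invProd (π ∘ a) ∘ Finsupp.erase z) s := by
  refine LinearIndepOn.comp_of_image (h.mono ?_) ((Finsupp.injOn_erase z k).mono fun α hα =>
    (hs α hα).2)
  rintro _ ⟨α, hα, rfl⟩
  exact erase_mem_nbcOn_contract (hs α hα).1 ((hs α hα).2 ▸ hk) hzE hzmax hπ

theorem linearIndepOn_invProd_nbcOn_of_erase {σ : LinearOrder (Fin n)} {E : Finset (Fin n)}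
    {z : Fin n} (hzE : z ∈ E) (hzmax : ∀ j ∈ E, σ.le j z) (ha : ∀ i ∈ E, a i ≠ 0)
    (ih : ∀ b : Fin n → Fin d → ℂ, (∀ i ∈ E.erase z, b i ≠ 0) →
      LinearIndepOn ℂ (invProd b) (nbcOn b σ (E.erase z))) :
    LinearIndepOn ℂ (invProd a) (nbcOn a σ E) := by
  rw [linearIndepOn_iff]
  intro l hl hl0
  have hnbc : ∀ α ∈ l.support, α ∈ nbcOn a σ E := fun α hα => (Finsupp.mem_supported ℂ l).mp hl hα
  set μ := l.support.sup id
  have hle : ∀ α ∈ l.support, α ≤ μ := fun α hα => Finset.le_sup (f := id) hα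
  by_cases hμz : μ z = 0
  · refine linearIndepOn_iff.mp (ih a fun i hi => ha i (Finset.mem_of_mem_erase hi)) l ?_ hl0
    exact (Finsupp.mem_supported ℂ l).mpr fun α hα =>
      mem_nbcOn_erase (hnbc α hα) (Nat.eq_zero_of_le_zero (hμz ▸ hle α hα z))
  by_contra hl_ne
  obtain ⟨α₁, hα₁, hα₁z⟩ : ∃ α₁ ∈ l.support, α₁ z = μ z := by
    obtain ⟨α₁, hα₁, hsup⟩ := l.support.exists_mem_eq_sup
      (Finsupp.support_nonempty_iff.mpr hl_ne) (fun α => α z)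
    exact ⟨α₁, hα₁, hsup.symm.trans (Finsupp.finset_sup_apply _ _ _).symm⟩
  have hμE : μ.support ⊆ E := by
    rw [Finsupp.support_finset_sup]
    exact Finset.biUnion_subset.mpr fun α hα => (hnbc α hα).1
  obtain ⟨q, hq⟩ := (ℂ ∙ a z).exists_isCompl
  set π := q.projection (ℂ ∙ a z) hq.symm
  have hπ : LinearMap.ker π = ℂ ∙ a z := Submodule.ker_projection _
  have hb : ∀ i ∈ E.erase z, π (a i) ≠ 0 := fun i hi =>
    (hnbc α₁ hα₁).2.apply_ne_zero_of_ker_eq (Finsupp.mem_support_iff.mpr (hα₁z ▸ hμz)) hzE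
      hzmax hπ hi
  have hrel := sum_smul_invProd_contract_eq_zero
    (LinearMap.mem_ker.mp (hπ ▸ Submodule.mem_span_singleton_self (a z))) hle
    (fun i hi => ha i (hμE hi)) (fun i hi => hb i (Finset.erase_subset_erase z hμE hi))
    (by rwa [Finsupp.linearCombination_apply] at hl0)
  have hind := (ih _ hb).comp_erase_of_nbcOn hzE hzmax hπ hμz
    (s := l.support.filter (· z = μ z)) fun α hα => by
      obtain ⟨hα, hαz⟩ := Finset.mem_filter.mp hα
      exact ⟨hnbc α hα, hαz⟩
  exact Finsupp.mem_support_iff.mp hα₁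
    (linearIndepOn_finset_iff.mp hind l hrel α₁ (Finset.mem_filter.mpr ⟨hα₁, hα₁z⟩))

theorem linearIndepOn_invProd_nbcOn (σ : LinearOrder (Fin n)) (E : Finset (Fin n))
    (a : Fin n → Fin d → ℂ) (ha : ∀ i ∈ E, a i ≠ 0) :
    LinearIndepOn ℂ (invProd a) (nbcOn a σ E) := by
  induction E using Finset.strongInduction generalizing a with
  | H E ih =>
    rcases E.eq_empty_or_nonempty with rfl | hE
    · exact (LinearIndepOn.singleton (by simp [invProd_zero])).mono nbcOn_empty
    obtain ⟨z, hzE, hzmax⟩ : ∃ z ∈ E, ∀ j ∈ E, σ.le j z := by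
      let := σ
      exact E.exists_max_image id hE
    exact linearIndepOn_invProd_nbcOn_of_erase hzE hzmax ha fun b hb =>
      ih _ (E.erase_ssubset hzE) b hb

end Independence

theorem gradedDim_ker_phiHom {d n : ℕ} {a : Fin n → Fin d → ℂ} (ha : ∀ i, a i ≠ 0)
    (σ : LinearOrder (Fin n)) (m : ℕ) :
    gradedDim (RingHom.ker (phiHom a)) m = Nat.card (faceMonomials (BCFace a σ) m) := by
  set B := faceMonomials (BCFace a σ) m
  have := (faceMonomials_finite (BCFace a σ) m).fintype
  let Ψ := (phiAlg a).toLinearMap ∘ₗ (homogeneousSubmodule (Fin n) ℂ m).subtype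
  have hrange : LinearMap.range Ψ = Submodule.span ℂ (invProd a '' B) := by
    rw [LinearMap.range_comp, Submodule.range_subtype, homogeneousSubmodule_eq_finsupp_supported,
      AddMonoidAlgebra.supported_eq_span_single, Submodule.map_span, Set.image_image]
    have himage : (fun β => (phiAlg a).toLinearMap (AddMonoidAlgebra.single β 1)) = invProd a :=
      _root_.funext fun β => by
        rw [AlgHom.toLinearMap_apply, single_eq_monomial, phiAlg_monomial_one]
    rw [himage]
    refine le_antisymm (Submodule.span_le.mpr ?_)
      (Submodule.span_mono (Set.image_mono fun β hβ => hβ.2))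
    rintro _ ⟨β, rfl : β.degree = m, rfl⟩
    exact invProd_mem_span_faceMonomials ha σ β
  have hind : LinearIndepOn ℂ (invProd a) B :=
    (linearIndepOn_invProd_nbcOn σ Finset.univ a fun i _ => ha i).mono fun β hβ =>
      ⟨Finset.subset_univ _, bcFaceOn_univ.mpr hβ.1⟩
  rw [gradedDim_eq_finrank_range Ψ (fun p => by simp [Ψ, phiHom_apply]), hrange,
    Set.image_eq_range, finrank_span_eq_card hind, Nat.card_eq_fintype_card]

theorem stmt3_general {d n : ℕ} (a : Fin n → Fin d → ℂ)
    (ha : ∀ i, a i ≠ 0)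
    (σ : LinearOrder (Fin n)) :
    ∀ m : ℕ, gradedDim (RingHom.ker (phiHom a)) m = gradedDim (bcIdeal a σ) m := by
  intro m
  rw [gradedDim_ker_phiHom ha σ m, bcIdeal,
    gradedDim_span_prod_X (fun _ _ hST hT => BCFace.subset hST hT)]

/-- For every linear order `σ` on `{1,…,n}` and every degree `m`, the Hilbert function of
`R(𝒜) = ℂ[e]/I(𝒜)` agrees with that of the Stanley–Reisner ring of the `σ`-broken
circuit complex. -/
theorem stmt3 {d n : ℕ} (a : Fin n → Fin d → ℂ)
    (ha : ∀ i, a i ≠ 0)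
    (hspan : Submodule.span ℂ (Set.range a) = ⊤)
    (σ : LinearOrder (Fin n)) :
    ∀ m : ℕ, gradedDim (RingHom.ker (phiHom a)) m = gradedDim (bcIdeal a σ) m :=
  stmt3_general a ha σ
end
end

section
/- For a point z ∈ ℂ^n, the following are equivalent: (i) the stabilizer {t ∈ T^k : t_i z_i = z_i for all i} of z in T^k is finite; (ii) the family of vectors {a_i : i such that z_i = 0} is linearly independent in ℂ^d; (iii) the linear map ℂ^n → (𝔱^k)^* sending w to the functional x ↦ Σ_i z_i w_i x_i is surjective. -/
open scoped BigOperators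

noncomputable section

/-- The subgroup `T^k ⊆ (ℂ^×)^n` cut out by the integer matrix `A`:
`T^k = {t : Π_i t_i^{A_{ji}} = 1 for j = 1,…,d}`. -/
def Tk {d n : ℕ} (A : Matrix (Fin d) (Fin n) ℤ) : Set (Fin n → ℂˣ) :=
  {t | ∀ j : Fin d, ∏ i : Fin n, (t i) ^ (A j i) = 1}

/-- `𝔱^k = ker (A : ℂ^n → ℂ^d)`. -/
def tkLie {d n : ℕ} (A : Matrix (Fin d) (Fin n) ℤ) : Submodule ℂ (Fin n → ℂ) :=
  LinearMap.ker (Matrix.mulVecLin (A.map (Int.cast : ℤ → ℂ)))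

/-- The linear functional `x ↦ Σ_i z_i w_i x_i` on `𝔱^k`, i.e. `μ(z,w) ∈ (𝔱^k)^*`. -/
def muL {d n : ℕ} (A : Matrix (Fin d) (Fin n) ℤ) (z w : Fin n → ℂ) :
    Module.Dual ℂ (tkLie A) :=
  ∑ i : Fin n, (z i * w i) •
    ((LinearMap.proj (R := ℂ) (φ := fun _ : Fin n => ℂ) i).comp (tkLie A).subtype)

/-- The stabilizer of `z ∈ ℂ^n` in `T^k`. -/
def stab {d n : ℕ} (A : Matrix (Fin d) (Fin n) ℤ) (z : Fin n → ℂ) : Set (Fin n → ℂˣ) :=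
  {t | t ∈ Tk A ∧ ∀ i, (t i : ℂ) * z i = z i}

/-! Let `Z = {i | z i = 0}`. Both (ii) and (iii) say that no nonzero vector of `𝔱^k = ker A`
is supported on `Z`; for (iii) this is because `w ↦ μ(z, w)` is, up to the isomorphism
`ℂ^n ≃ (ℂ^n)^*`, the dual of the map `x ↦ z * x` restricted to `𝔱^k`.
If such a vector `c` exists, `u ↦ exp (u c)` is a one-parameter subgroup of the stabilizer,
which is therefore infinite. Conversely, if the columns `a_i`, `i ∈ Z`, are independent, then
clearing denominators in a rational left inverse gives an integer matrix `C` with `C A_Z = N • 1`,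
`N ≠ 0`; applying the rows of `C` to the defining equations of `T^k` shows that every coordinate of
a stabilizing `t` is an `N`-th root of unity. -/

open scoped Matrix

section Columns

variable {K m ι : Type*} [CommRing K] [NoZeroDivisors K]

theorem Pi.mem_ker_mulLeft_iff {z x : ι → K} :
    x ∈ LinearMap.ker (LinearMap.mulLeft K z) ↔ ∀ i, z i ≠ 0 → x i = 0 := by
  simp only [LinearMap.mem_ker, LinearMap.mulLeft_apply, funext_iff, Pi.mul_apply,
    Pi.zero_apply, mul_eq_zero]
  exact forall_congr' fun i => or_iff_not_imp_left

theorem Matrix.linearIndependent_cols_of_zeros_iff_disjoint_ker [Fintype ι] (M : Matrix m ι K)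
    (z : ι → K) :
    LinearIndependent K (fun i : {i // z i = 0} => fun j => M j i) ↔
      Disjoint (LinearMap.ker M.mulVecLin) (LinearMap.ker (LinearMap.mulLeft K z)) := by
  classical
  have hsum : ∀ x : ι → K, (∀ i, z i ≠ 0 → x i = 0) →
      ∑ i : {i // z i = 0}, x i • (fun j => M j i) = M *ᵥ x := by
    intro x hx
    have hrest : ∑ i : {i // z i ≠ 0}, MulOpposite.op (x i) • Mᵀ i = 0 :=
      Finset.sum_eq_zero fun i _ => by simp [hx i i.2]
    rw [Matrix.mulVec_eq_sum, ← Fintype.sum_subtype_add_sum_subtype (fun i => z i = 0), hrest,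
      add_zero]
    simp only [op_smul_eq_smul]
    rfl
  rw [Fintype.linearIndependent_iff, Submodule.disjoint_def]
  constructor
  · intro h x hx hxz
    rw [Pi.mem_ker_mulLeft_iff] at hxz
    funext i
    by_cases hi : z i = 0
    · exact h (fun i => x i) ((hsum x hxz).trans hx) ⟨i, hi⟩
    · exact hxz i hi
  · intro h g hg i
    set x : ι → K := fun i => if hi : z i = 0 then g ⟨i, hi⟩ else 0
    have hxz : ∀ i, z i ≠ 0 → x i = 0 := fun i hi => dif_neg hi
    have hx : M *ᵥ x = 0 := by
      rw [← hsum x hxz, ← hg]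
      exact Finset.sum_congr rfl fun i _ => by simp [x, i.2]
    simpa [x, i.2] using congr_fun (h x hx (Pi.mem_ker_mulLeft_iff.mpr hxz)) i

end Columns

theorem exists_intCast_eq_int_mul {ι : Type*} [Finite ι] (q : ι → ℚ) :
    ∃ (N : ℤ) (v : ι → ℤ), N ≠ 0 ∧ ∀ i, (v i : ℚ) = N * q i := by
  obtain ⟨b, hb⟩ := IsLocalization.exist_integer_multiples_of_finite (nonZeroDivisors ℤ) q
  choose v hv using hb
  exact ⟨b, v, nonZeroDivisors.coe_ne_zero b, fun i => by simpa [zsmul_eq_mul] using hv i⟩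

theorem Matrix.exists_int_mul_eq_smul_one {m ι K : Type*} [Fintype m] [Fintype ι]
    [DecidableEq ι] [Field K] [CharZero K] (B : Matrix m ι ℤ)
    (hB : LinearIndependent K (B.map (Int.cast : ℤ → K)).col) :
    ∃ (N : ℤ) (C : Matrix ι m ℤ), N ≠ 0 ∧ C * B = N • 1 := by
  classical
  have hinj : Function.Injective (B.map (Int.cast : ℤ → ℚ)).mulVec := by
    rw [Matrix.mulVec_injective_iff]
    have hBK : LinearIndependent ℚ (B.map (Int.cast : ℤ → K)).col := hB.restrict_scalars' ℚ
    have hcol : (B.map (Int.cast : ℤ → K)).col =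
        LinearMap.compLeft (Algebra.linearMap ℚ K) m ∘ (B.map (Int.cast : ℤ → ℚ)).col := by
      ext i j
      simp
    rw [hcol] at hBK
    exact hBK.of_comp
  obtain ⟨g, hg⟩ := LinearMap.exists_leftInverse_of_injective (B.map (Int.cast : ℤ → ℚ)).mulVecLin
    (LinearMap.ker_eq_bot.mpr hinj)
  have hgB : LinearMap.toMatrix' g * B.map (Int.cast : ℤ → ℚ) = 1 := by
    rw [← LinearMap.toMatrix'_toLin' (B.map _), ← LinearMap.toMatrix'_comp,
      Matrix.toLin'_apply', hg, LinearMap.toMatrix'_id]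
  obtain ⟨N, v, hN, hv⟩ := exists_intCast_eq_int_mul fun p : ι × m => LinearMap.toMatrix' g p.1 p.2
  refine ⟨N, Matrix.of fun i j => v (i, j), hN,
    Matrix.map_injective (f := (Int.cast : ℤ → ℚ)) Int.cast_injective ?_⟩
  ext i j
  have hij := congr_fun (congr_fun hgB i) j
  simp only [Matrix.mul_apply, Matrix.map_apply, Matrix.of_apply] at hij ⊢
  push_cast
  simp only [hv, mul_assoc, ← Finset.mul_sum, hij]
  simp [Matrix.one_apply]

theorem zpow_sum_eq_prod {G ι : Type*} [CommGroup G] (g : G) (s : Finset ι) (e : ι → ℤ) :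
    g ^ (∑ j ∈ s, e j) = ∏ j ∈ s, g ^ e j := by
  have := map_prod (zpowersHom G g) (fun j => Multiplicative.ofAdd (e j)) s
  rwa [← ofAdd_sum] at this

theorem zpow_eq_one_of_mul_eq_smul_one {G m ι : Type*} [CommGroup G] [Fintype m] [Fintype ι]
    [DecidableEq ι] {B : Matrix m ι ℤ} {C : Matrix ι m ℤ} {N : ℤ} (hCB : C * B = N • 1)
    {t : ι → G} (ht : ∀ j, ∏ i, t i ^ B j i = 1) (i : ι) : t i ^ N = 1 :=
  calc t i ^ N = ∏ i', t i' ^ (C * B) i i' := by simp [hCB, Matrix.one_apply]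
    _ = ∏ j, (∏ i', t i' ^ B j i') ^ C i j := by
      simp only [Matrix.mul_apply, zpow_sum_eq_prod, ← Finset.prod_zpow, ← zpow_mul]
      rw [Finset.prod_comm]
      simp only [mul_comm]
    _ = 1 := by simp [ht]

theorem finite_setOf_zpow_eq_one {R : Type*} [CommRing R] [IsDomain R] {N : ℤ} (hN : N ≠ 0) :
    {u : Rˣ | u ^ N = 1}.Finite := by
  have : NeZero N.natAbs := ⟨Int.natAbs_ne_zero.mpr hN⟩
  have hroots : {u : Rˣ | u ^ N = 1} = (rootsOfUnity N.natAbs R : Set Rˣ) := by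
    ext u
    simp [mem_rootsOfUnity, pow_natAbs_eq_one]
  rw [hroots]
  exact (inferInstance : Finite (rootsOfUnity N.natAbs R))

section Stabilizer

variable {d n : ℕ} (A : Matrix (Fin d) (Fin n) ℤ) (z : Fin n → ℂ)

theorem muL_eq_dualMap (w : Fin n → ℂ) :
    muL A z w = ((LinearMap.mulLeft ℂ z).domRestrict (tkLie A)).dualMap
      (Module.piEquiv (Fin n) ℂ ℂ w) := by
  ext x
  simp [muL, Module.piEquiv_apply_apply, mul_right_comm]

theorem surjective_muL_iff : Function.Surjective (fun w => muL A z w) ↔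
    Disjoint (tkLie A) (LinearMap.ker (LinearMap.mulLeft ℂ z)) := by
  rw [show (fun w => muL A z w) = _ ∘ Module.piEquiv (Fin n) ℂ ℂ from funext (muL_eq_dualMap A z),
    (Module.piEquiv (Fin n) ℂ ℂ).surjective.of_comp_iff, LinearMap.dualMap_surjective_iff,
    LinearMap.injective_domRestrict_iff]

variable {A z}

theorem stab_apply_eq_one {t : Fin n → ℂˣ} (ht : t ∈ stab A z) {i : Fin n} (hi : z i ≠ 0) :
    t i = 1 :=
  Units.ext (mul_right_cancel₀ hi (by simpa using ht.2 i))

theorem prod_zpow_subtype_eq_one {t : Fin n → ℂˣ} (ht : t ∈ stab A z) (j : Fin d) :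
    ∏ i : {i // z i = 0}, t i ^ A j i = 1 := by
  have hrest : ∏ i : {i // z i ≠ 0}, t i ^ A j i = 1 :=
    Finset.prod_eq_one fun i _ => by rw [stab_apply_eq_one ht i.2, one_zpow]
  rw [← ht.1 j, ← Fintype.prod_subtype_mul_prod_subtype (fun i => z i = 0), hrest, mul_one]

theorem exp_mem_stab {c : Fin n → ℂ} (hc : c ∈ tkLie A) (hcz : ∀ i, z i ≠ 0 → c i = 0) (u : ℂ) :
    (fun i => Units.mk0 (Complex.exp (u * c i)) (Complex.exp_ne_zero _)) ∈ stab A z := by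
  refine ⟨fun j => Units.ext ?_, fun i => ?_⟩
  · have hj : ∑ i, (A j i : ℂ) * c i = 0 := by
      simpa [Matrix.mulVec, dotProduct] using congr_fun hc j
    simp only [Units.coe_prod, Units.val_zpow_eq_zpow_val, Units.val_mk0, ← Complex.exp_int_mul,
      ← Complex.exp_sum, Units.val_one]
    rw [← Complex.exp_zero]
    congr 1
    calc ∑ i, (A j i : ℂ) * (u * c i) = u * ∑ i, (A j i : ℂ) * c i := by
          rw [Finset.mul_sum]
          exact Finset.sum_congr rfl fun i _ => by ring
       _ = 0 := by rw [hj, mul_zero]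
  · by_cases hi : z i = 0
    · simp [hi]
    · simp [hcz i hi]

theorem stab_infinite_of_not_disjoint
    (h : ¬ Disjoint (tkLie A) (LinearMap.ker (LinearMap.mulLeft ℂ z))) : (stab A z).Infinite := by
  obtain ⟨c, hc, hcz, hc0⟩ : ∃ c ∈ tkLie A, c ∈ LinearMap.ker (LinearMap.mulLeft ℂ z) ∧ c ≠ 0 := by
    simpa [Submodule.disjoint_def] using h
  obtain ⟨i₀, hi₀⟩ := Function.ne_iff.mp hc0
  refine Set.infinite_of_injective_forall_mem (f := fun r : ℝ => fun i =>
    Units.mk0 (Complex.exp ((r / c i₀) * c i)) (Complex.exp_ne_zero _)) ?_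
    fun r => exp_mem_stab hc (Pi.mem_ker_mulLeft_iff.mp hcz) _
  intro r s hrs
  have hexp := congr_arg Units.val (congr_fun hrs i₀)
  simp [div_mul_cancel₀ _ hi₀] at hexp
  exact Real.exp_injective (by exact_mod_cast hexp)

theorem stab_finite_of_linearIndependent
    (h : LinearIndependent ℂ (fun i : {i // z i = 0} => fun j => (A j i : ℂ))) :
    (stab A z).Finite := by
  obtain ⟨N, C, hN, hCB⟩ := Matrix.exists_int_mul_eq_smul_one (A.submatrix id Subtype.val) h
  refine (Set.Finite.pi fun _ => finite_setOf_zpow_eq_one hN).subset fun t ht i _ => ?_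
  by_cases hi : z i = 0
  · exact zpow_eq_one_of_mul_eq_smul_one hCB (prod_zpow_subtype_eq_one ht) ⟨i, hi⟩
  · simp [stab_apply_eq_one ht hi]

end Stabilizer

theorem stmt5_general {d n : ℕ}
    (A : Matrix (Fin d) (Fin n) ℤ)
    (z : Fin n → ℂ) :
    List.TFAE
      [ (stab A z).Finite,
        LinearIndependent ℂ (fun i : {i : Fin n // z i = 0} => fun j : Fin d => (A j i : ℂ)),
        Function.Surjective (fun w : Fin n → ℂ => muL A z w) ] := by
  have hli := Matrix.linearIndependent_cols_of_zeros_iff_disjoint_ker (A.map (Int.cast : ℤ → ℂ)) z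
  tfae_have 1 → 2 := fun hfin =>
    hli.mpr (by_contra fun h => stab_infinite_of_not_disjoint h hfin)
  tfae_have 2 → 1 := stab_finite_of_linearIndependent
  tfae_have 2 ↔ 3 := hli.trans (surjective_muL_iff A z).symm
  tfae_finish

/-- For a point `z ∈ ℂ^n`, the following are equivalent: (i) the stabilizer of `z` in `T^k`
is finite; (ii) the vectors `{a_i : z_i = 0}` are linearly independent in `ℂ^d`;
(iii) the linear map `ℂ^n → (𝔱^k)^*`, `w ↦ (x ↦ Σ_i z_i w_i x_i)`, is surjective. -/
theorem stmt5 {d n : ℕ} (hd : 0 < d) (hn : 0 < n) (hdn : d ≤ n) (k : ℕ) (hk : k = n - d)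
    (A : Matrix (Fin d) (Fin n) ℤ)
    (hcols : ∀ i : Fin n, (fun j => A j i) ≠ (0 : Fin d → ℤ))
    (hrank : (A.map (Int.cast : ℤ → ℚ)).rank = d)
    (z : Fin n → ℂ) :
    List.TFAE
      [ (stab A z).Finite,
        LinearIndependent ℂ (fun i : {i : Fin n // z i = 0} => fun j : Fin d => (A j i : ℂ)),
        Function.Surjective (fun w : Fin n → ℂ => muL A z w) ] :=
  stmt5_general A z
end
end

section
/- If λ ∈ (𝔱^k)^* is a regular value of μ, then T^k acts locally freely on μ^{-1}(λ): for every (z,w) ∈ ℂ^n × ℂ^n with μ(z,w) = λ, the stabilizer {t ∈ T^k : t_i z_i = z_i and t_i^{-1} w_i = w_i for all i} of (z,w) under the action t·(z,w) = (t·z, t^{-1}·w) is finite. -/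
/-! At a point `(z, w)` of `μ⁻¹(λ)` the stabilizer is trivial in every coordinate `i` with
`z i ≠ 0` or `w i ≠ 0`, so only the coordinates in `S = {i | z i = w i = 0}` matter. The
derivative of `μ` at `(z, w)` pairs `(u, v)` with `x ∈ 𝔱^k` to `Σ (z_i v_i + w_i u_i) x_i`,
which kills every `x` supported on `S`; surjectivity therefore forces the columns of `A`
indexed by `S` to be linearly independent. Then `adj(AₛᵀAₛ) Aₛᵀ` is an integer left inverse
of `Aₛ` up to the factor `N = det (AₛᵀAₛ) ≠ 0`, and combining the defining relations of
`T^k` with its rows gives `t_i ^ N = 1` for all `i`: the stabilizer consists of `N`-th roots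
of unity. -/

open scoped BigOperators

noncomputable section

/-- The moment map `μ : ℂ^n × ℂ^n → (𝔱^k)^*`, `μ(z,w)(x) = Σ_i z_i w_i x_i`. -/
def muMap {d n : ℕ} (A : Matrix (Fin d) (Fin n) ℤ) :
    (Fin n → ℂ) × (Fin n → ℂ) → (tkLie A →L[ℂ] ℂ) :=
  fun p => LinearMap.toContinuousLinearMap (muL A p.1 p.2)

/-- `λ` is a regular value of `μ` if the derivative of `μ` is surjective at every point of
`μ⁻¹(λ)`. -/
def IsRegularValue {d n : ℕ} (A : Matrix (Fin d) (Fin n) ℤ) (lam : tkLie A →L[ℂ] ℂ) : Prop :=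
  ∀ p : (Fin n → ℂ) × (Fin n → ℂ), muMap A p = lam →
    Function.Surjective (fderiv ℂ (muMap A) p)

open scoped Matrix
open Function

theorem zpow_sum {G ι : Type*} [CommGroup G] (a : G) (s : Finset ι) (f : ι → ℤ) :
    a ^ (∑ i ∈ s, f i) = ∏ i ∈ s, a ^ f i := by
  induction s using Finset.cons_induction with
  | empty => simp
  | cons i s hi ih => rw [Finset.sum_cons, Finset.prod_cons, zpow_add, ih]

section Torsion

variable {G ι κ : Type*} [CommGroup G] [Fintype ι] [Fintype κ]

theorem prod_zpow_vecMul (A : Matrix κ ι ℤ) (m : κ → ℤ) (t : ι → G) :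
    ∏ i, t i ^ (m ᵥ* A) i = ∏ j, (∏ i, t i ^ A j i) ^ m j := by
  simp only [Matrix.vecMul, dotProduct, zpow_sum, ← Finset.prod_zpow, zpow_mul']
  exact Finset.prod_comm

theorem Matrix.det_transpose_mul_self_ne_zero {R : Type*} [CommRing R] [LinearOrder R]
    [IsStrictOrderedRing R] [DecidableEq ι] {A : Matrix κ ι R}
    (hA : Injective A.mulVec) : (Aᵀ * A).det ≠ 0 := by
  rw [Ne, ← Matrix.exists_mulVec_eq_zero_iff]
  rintro ⟨v, hv, hAv⟩
  have hAv' := congr_arg (v ⬝ᵥ ·) hAv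
  rw [← Matrix.mulVec_mulVec, Matrix.dotProduct_mulVec, Matrix.vecMul_transpose,
    dotProduct_zero] at hAv'
  exact hv (hA (by rwa [dotProduct_self_eq_zero, ← Matrix.mulVec_zero A] at hAv'))

theorem exists_pow_eq_one_of_prod_zpow_eq_one [DecidableEq ι] {A : Matrix κ ι ℤ}
    (hA : Injective A.mulVec) :
    ∃ N : ℕ, 0 < N ∧ ∀ t : ι → G, (∀ j, ∏ i, t i ^ A j i = 1) → ∀ i, t i ^ N = 1 := by
  refine ⟨(Aᵀ * A).det.natAbs, Int.natAbs_pos.2 (Matrix.det_transpose_mul_self_ne_zero hA),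
    fun t ht i => ?_⟩
  -- `adj(AᵀA) Aᵀ` is a left inverse of `A` up to the factor `det (AᵀA)`
  have hrow : ((Aᵀ * A).adjugate * Aᵀ) i ᵥ* A = Pi.single i (Aᵀ * A).det := by
    ext i'
    change ((Aᵀ * A).adjugate * Aᵀ * A) i i' = _
    rw [Matrix.mul_assoc, Matrix.adjugate_mul]
    simp [Matrix.one_apply, Pi.single_apply, eq_comm]
  rw [pow_natAbs_eq_one]
  calc t i ^ (Aᵀ * A).det = ∏ i', t i' ^ (Pi.single i (Aᵀ * A).det : ι → ℤ) i' := by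
        simp [Pi.single_apply]
    _ = 1 := by simp [← hrow, prod_zpow_vecMul, ht]

theorem exists_pow_eq_one_of_prod_zpow_eq_one_of_mulSupport_subset [DecidableEq ι]
    (p : ι → Prop) [DecidablePred p] {A : Matrix κ ι ℤ}
    (hA : Injective (A.submatrix id ((↑) : Subtype p → ι)).mulVec) :
    ∃ N : ℕ, 0 < N ∧ ∀ t : ι → G, (∀ j, ∏ i, t i ^ A j i = 1) →
      mulSupport t ⊆ {i | p i} → ∀ i, t i ^ N = 1 := by
  obtain ⟨N, hN, hNt⟩ := exists_pow_eq_one_of_prod_zpow_eq_one (G := G) hA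
  refine ⟨N, hN, fun t ht hsupp i => ?_⟩
  have hone : ∀ i, ¬ p i → t i = 1 := fun i hi => notMem_mulSupport.1 fun h => hi (hsupp h)
  by_cases hi : p i
  · refine hNt (fun i => t i) (fun j => ?_) ⟨i, hi⟩
    rw [← ht j, ← Fintype.prod_subtype_mul_prod_subtype p,
      Fintype.prod_eq_one (fun i : {i // ¬ p i} => t i ^ A j i) fun i => by
        rw [hone i i.2, one_zpow], mul_one]
    rfl
  · simp [hone i hi]

end Torsion

theorem finite_setOf_forall_pow_eq_one {R ι : Type*} [CommRing R] [IsDomain R] [Finite ι]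
    {N : ℕ} (hN : 0 < N) : {t : ι → Rˣ | ∀ i, t i ^ N = 1}.Finite := by
  have : NeZero N := ⟨hN.ne'⟩
  exact (Set.Finite.pi fun _ =>
    Set.finite_coe_iff.1 (inferInstance : Finite (rootsOfUnity N R))).subset
    fun t ht i _ => (mem_rootsOfUnity N (t i)).2 (ht i)

theorem Units.eq_one_of_mul_eq_self {R : Type*} [Ring R] [NoZeroDivisors R] {t : Rˣ} {a b : R}
    (ha : t * a = a) (hb : ((t⁻¹ : Rˣ) : R) * b = b) (hab : ¬ (a = 0 ∧ b = 0)) : t = 1 := by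
  by_cases ha0 : a = 0
  · rw [← inv_eq_one, ← Units.val_eq_one]
    exact (mul_left_eq_self₀.1 hb).resolve_right fun hb0 => hab ⟨ha0, hb0⟩
  · exact Units.val_eq_one.1 ((mul_left_eq_self₀.1 ha).resolve_right ha0)

section MomentMap

variable {d n : ℕ} (A : Matrix (Fin d) (Fin n) ℤ)

def tkPairing : (Fin n → ℂ) →L[ℂ] tkLie A →L[ℂ] ℂ :=
  LinearMap.toContinuousLinearMap (𝕜 := ℂ) (E := Fin n → ℂ) (F' := tkLie A →L[ℂ] ℂ)
    (LinearMap.toContinuousLinearMap.toLinearMap ∘ₗ (tkLie A).subtype.dualMap ∘ₗ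
      (dotProductEquiv ℂ (Fin n)).toLinearMap)

theorem tkPairing_apply (y : Fin n → ℂ) (x : tkLie A) : tkPairing A y x = y ⬝ᵥ x := by
  simp [tkPairing]

theorem muMap_eq_tkPairing_comp_mul : muMap A = tkPairing A ∘ fun p => p.1 * p.2 := by
  ext p x
  simp [muMap, muL, tkPairing_apply, dotProduct, mul_comm]

theorem fderiv_muMap_apply (z w : Fin n → ℂ) (p : (Fin n → ℂ) × (Fin n → ℂ)) (x : tkLie A) :
    fderiv ℂ (muMap A) (z, w) p x = (z * p.2 + w * p.1) ⬝ᵥ x := by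
  have hmul := (hasFDerivAt_fst (𝕜 := ℂ) (p := (z, w))).fun_mul hasFDerivAt_snd
  have hderiv := HasFDerivAt.comp (G := tkLie A →L[ℂ] ℂ) (z, w) (tkPairing A).hasFDerivAt hmul
  rw [muMap_eq_tkPairing_comp_mul, hderiv.fderiv]
  simp [tkPairing_apply]

theorem eq_zero_of_surjective_fderiv_muMap {z w : Fin n → ℂ}
    (hsurj : Surjective (fderiv ℂ (muMap A) (z, w))) {x : tkLie A}
    (hz : z * x = 0) (hw : w * x = 0) : x = 0 := by
  by_contra hx
  obtain ⟨f, hf⟩ := SeparatingDual.exists_ne_zero (R := ℂ) hx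
  obtain ⟨p, rfl⟩ := hsurj f
  apply hf
  rw [fderiv_muMap_apply]
  refine Finset.sum_eq_zero fun i _ => ?_
  have hzi : z i * (x : Fin n → ℂ) i = 0 := congrFun hz i
  have hwi : w i * (x : Fin n → ℂ) i = 0 := congrFun hw i
  simp only [Pi.add_apply, Pi.mul_apply]
  linear_combination p.2 i * hzi + p.1 i * hwi

theorem injective_mulVec_submatrix_of_surjective_fderiv_muMap {z w : Fin n → ℂ}
    (hsurj : Surjective (fderiv ℂ (muMap A) (z, w))) :
    Injective (A.submatrix id ((↑) : {i // z i = 0 ∧ w i = 0} → Fin n)).mulVec := by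
  classical
  rw [← Matrix.coe_mulVecLin, injective_iff_map_eq_zero]
  intro v hv
  let x : Fin n → ℂ := fun i => if h : z i = 0 ∧ w i = 0 then (v ⟨i, h⟩ : ℂ) else 0
  have hx : x ∈ tkLie A := by
    ext j
    have hvj := congrArg (fun u : Fin d → ℤ => (u j : ℂ)) hv
    simp only [Matrix.mulVecLin_apply, Matrix.mulVec, dotProduct] at hvj ⊢
    rw [← Fintype.sum_subtype_add_sum_subtype fun i => z i = 0 ∧ w i = 0]
    have hS (i : {i // z i = 0 ∧ w i = 0}) : (A j i : ℂ) * x i = A j i * v i := by simp [x, i.2]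
    have hSc (i : {i // ¬ (z i = 0 ∧ w i = 0)}) : (A j i : ℂ) * x i = 0 := by simp [x, i.2]
    simpa [hS, hSc] using hvj
  have hx0 := eq_zero_of_surjective_fderiv_muMap A hsurj (x := ⟨x, hx⟩)
    (funext fun i => by by_cases h : z i = 0 ∧ w i = 0 <;> simp [x, h])
    (funext fun i => by by_cases h : z i = 0 ∧ w i = 0 <;> simp [x, h])
  ext i
  simpa [x, i.2] using congrFun (congrArg Subtype.val hx0) i

end MomentMap

theorem stmt6_general {d n : ℕ} (A : Matrix (Fin d) (Fin n) ℤ)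
    (lam : tkLie A →L[ℂ] ℂ) (hreg : IsRegularValue A lam) :
    ∀ z w : Fin n → ℂ, muMap A (z, w) = lam →
      {t : Fin n → ℂˣ | t ∈ Tk A ∧
        ∀ i, (t i : ℂ) * z i = z i ∧ ((t i)⁻¹ : ℂˣ) * w i = w i}.Finite := by
  intro z w hzw
  classical
  obtain ⟨N, hN, htorsion⟩ :=
    exists_pow_eq_one_of_prod_zpow_eq_one_of_mulSupport_subset (G := ℂˣ) _
      (injective_mulVec_submatrix_of_surjective_fderiv_muMap A (hreg _ hzw))
  exact (finite_setOf_forall_pow_eq_one hN).subset fun t ⟨htT, hfix⟩ =>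
    htorsion t htT fun i hi => by_contra fun hzero =>
      hi (Units.eq_one_of_mul_eq_self (hfix i).1 (hfix i).2 hzero)

/-- If `λ ∈ (𝔱^k)^*` is a regular value of `μ`, then `T^k` acts locally freely on `μ⁻¹(λ)`:
the stabilizer of every point `(z,w) ∈ μ⁻¹(λ)` under `t·(z,w) = (t·z, t⁻¹·w)` is finite. -/
theorem stmt6 {d n : ℕ} (hd : 0 < d) (hn : 0 < n) (hdn : d ≤ n) (k : ℕ) (hk : k = n - d)
    (A : Matrix (Fin d) (Fin n) ℤ)
    (hcols : ∀ i : Fin n, (fun j => A j i) ≠ (0 : Fin d → ℤ))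
    (hrank : (A.map (Int.cast : ℤ → ℚ)).rank = d)
    (lam : tkLie A →L[ℂ] ℂ) (hreg : IsRegularValue A lam) :
    ∀ z w : Fin n → ℂ, muMap A (z, w) = lam →
      {t : Fin n → ℂˣ | t ∈ Tk A ∧
        ∀ i, (t i : ℂ) * z i = z i ∧ ((t i)⁻¹ : ℂˣ) * w i = w i}.Finite :=
  stmt6_general A lam hreg
end
end

section
/- The set of regular values of the moment map μ : ℂ^n × ℂ^n → (𝔱^k)^*, i.e. the set of λ ∈ (𝔱^k)^* such that the derivative of μ is surjective at every point of μ^{-1}(λ), is open and dense in the finite-dimensional complex vector space (𝔱^k)^*. -/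
/-!
The moment map is `μ(z, w) = ∑ i, z i w i • φ i`, where `φ i` is the `i`-th coordinate
functional restricted to `𝔱^k`. Its derivative at `(z, w)` has image the span of those `φ i`
with `(z i, w i) ≠ 0`, and conversely every point of the span of `{φ i | i ∈ S}` is a value of
`μ` at a point supported in `S`. Hence `λ` is a regular value exactly when it avoids each of the
finitely many proper subspaces `span {φ i | i ∈ S}`, and the complement of a finite union of
proper subspaces of a finite-dimensional space is open and dense.
-/

open scoped BigOperators

noncomputable section

open Function Set Submodule

def regularValues (𝕜 : Type*) {E F : Type*} [NontriviallyNormedField 𝕜] [NormedAddCommGroup E]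
    [NormedSpace 𝕜 E] [NormedAddCommGroup F] [NormedSpace 𝕜 F] (f : E → F) : Set F :=
  {y | ∀ x, f x = y → Surjective (fderiv 𝕜 f x)}

section

variable {𝕜 E : Type*} [NontriviallyNormedField 𝕜] [AddCommGroup E] [TopologicalSpace E]
  [ContinuousAdd E] [Module 𝕜 E] [ContinuousSMul 𝕜 E]

theorem Submodule.dense_compl_of_ne_top {s : Submodule 𝕜 E} (hs : s ≠ ⊤) :
    Dense (s : Set E)ᶜ := by
  rw [← interior_eq_empty_iff_dense_compl, ← not_nonempty_iff_eq_empty]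
  exact fun h ↦ hs (s.eq_top_of_nonempty_interior' h)

end

section

variable {𝕜 E ι : Type*} [NontriviallyNormedField 𝕜] [CompleteSpace 𝕜] [NormedAddCommGroup E]
  [NormedSpace 𝕜 E] [FiniteDimensional 𝕜 E]

theorem isOpen_biInter_compl_submodule {S : Set ι} (hS : S.Finite) (V : ι → Submodule 𝕜 E) :
    IsOpen (⋂ i ∈ S, (V i : Set E)ᶜ) :=
  hS.isOpen_biInter fun i _ ↦ (V i).closed_of_finiteDimensional.isOpen_compl

theorem dense_biInter_compl_submodule {S : Set ι} (hS : S.Finite) (V : ι → Submodule 𝕜 E)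
    (hV : ∀ i ∈ S, V i ≠ ⊤) : Dense (⋂ i ∈ S, (V i : Set E)ᶜ) :=
  have : CompleteSpace E := FiniteDimensional.complete 𝕜 E
  dense_biInter_of_isOpen (fun i _ ↦ (V i).closed_of_finiteDimensional.isOpen_compl)
    hS.countable fun i hi ↦ dense_compl_of_ne_top (hV i hi)

end

section

variable {𝕜 E ι : Type*} [NontriviallyNormedField 𝕜] [NormedAddCommGroup E] [NormedSpace 𝕜 E]
  [Fintype ι]

variable (𝕜) in
def sumMulSMul (v : ι → E) (p : (ι → 𝕜) × (ι → 𝕜)) : E := ∑ i, (p.1 i * p.2 i) • v i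

def pairSupport (p : (ι → 𝕜) × (ι → 𝕜)) : Set ι := {i | p.1 i ≠ 0 ∨ p.2 i ≠ 0}

variable (v : ι → E)

theorem fderiv_sumMulSMul_apply (p q : (ι → 𝕜) × (ι → 𝕜)) :
    fderiv 𝕜 (sumMulSMul 𝕜 v) p q = ∑ i, (p.1 i * q.2 i + q.1 i * p.2 i) • v i := by
  let fst i : (ι → 𝕜) × (ι → 𝕜) →L[𝕜] 𝕜 := .proj i ∘L .fst 𝕜 (ι → 𝕜) (ι → 𝕜)
  let snd i : (ι → 𝕜) × (ι → 𝕜) →L[𝕜] 𝕜 := .proj i ∘L .snd 𝕜 (ι → 𝕜) (ι → 𝕜)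
  have h : HasFDerivAt (sumMulSMul 𝕜 v) (∑ i, (p.1 i • snd i + p.2 i • fst i).smulRight (v i)) p :=
    .fun_sum fun i _ ↦ ((fst i).hasFDerivAt.mul (snd i).hasFDerivAt).smul_const (v i)
  simp [h.fderiv, fst, snd, mul_comm]

theorem range_fderiv_sumMulSMul (p : (ι → 𝕜) × (ι → 𝕜)) :
    (fderiv 𝕜 (sumMulSMul 𝕜 v) p).range = span 𝕜 (v '' pairSupport p) := by
  classical
  apply le_antisymm
  · rintro _ ⟨q, rfl⟩
    rw [ContinuousLinearMap.coe_coe, fderiv_sumMulSMul_apply]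
    refine sum_mem fun i _ ↦ ?_
    by_cases hi : i ∈ pairSupport p
    · exact smul_mem _ _ (subset_span (mem_image_of_mem v hi))
    · obtain ⟨h₁, h₂⟩ : p.1 i = 0 ∧ p.2 i = 0 := by simpa [pairSupport] using hi
      simp [h₁, h₂]
  · rw [span_le]
    rintro _ ⟨i, hi | hi, rfl⟩
    · refine ⟨(0, Pi.single i (p.1 i)⁻¹), ?_⟩
      simp [fderiv_sumMulSMul_apply, Pi.single_apply, hi]
    · refine ⟨(Pi.single i (p.2 i)⁻¹, 0), ?_⟩
      simp [fderiv_sumMulSMul_apply, Pi.single_apply, hi]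

theorem sumMulSMul_mem_span_pairSupport (p : (ι → 𝕜) × (ι → 𝕜)) :
    sumMulSMul 𝕜 v p ∈ span 𝕜 (v '' pairSupport p) := by
  refine sum_mem fun i _ ↦ ?_
  by_cases hi : i ∈ pairSupport p
  · exact smul_mem _ _ (subset_span (mem_image_of_mem v hi))
  · obtain ⟨h₁, -⟩ : p.1 i = 0 ∧ p.2 i = 0 := by simpa [pairSupport] using hi
    simp [h₁]

theorem exists_sumMulSMul_eq_of_mem_span {S : Set ι} {y : E} (hy : y ∈ span 𝕜 (v '' S)) :
    ∃ p : (ι → 𝕜) × (ι → 𝕜), sumMulSMul 𝕜 v p = y ∧ pairSupport p ⊆ S := by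
  classical
  obtain ⟨l, hlS, rfl⟩ := (Finsupp.mem_span_image_iff_linearCombination 𝕜).mp hy
  have hl : ∀ i ∉ S, l i = 0 := fun i hi ↦ Finsupp.notMem_support_iff.mp fun h ↦ hi (hlS h)
  refine ⟨(l, S.indicator 1), ?_, ?_⟩
  · rw [Finsupp.linearCombination_apply, Finsupp.sum_fintype _ _ (by simp)]
    refine Finset.sum_congr rfl fun i _ ↦ ?_
    by_cases hi : i ∈ S <;> simp [hi, hl]
  · rintro i (hi | hi) <;> by_contra hiS
    · exact hi (hl i hiS)
    · exact hi (indicator_of_notMem hiS _)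

theorem surjective_fderiv_sumMulSMul_iff (p : (ι → 𝕜) × (ι → 𝕜)) :
    Surjective (fderiv 𝕜 (sumMulSMul 𝕜 v) p) ↔ span 𝕜 (v '' pairSupport p) = ⊤ := by
  rw [← range_fderiv_sumMulSMul, LinearMap.range_eq_top, ContinuousLinearMap.coe_coe]

theorem regularValues_sumMulSMul :
    regularValues 𝕜 (sumMulSMul 𝕜 v) =
      ⋂ S ∈ {S : Set ι | span 𝕜 (v '' S) ≠ ⊤}, (span 𝕜 (v '' S) : Set E)ᶜ := by
  ext y
  simp only [regularValues, mem_ofPred_eq, mem_iInter, mem_compl_iff, SetLike.mem_coe,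
    surjective_fderiv_sumMulSMul_iff]
  constructor
  · intro hreg S hS hy
    obtain ⟨p, rfl, hpS⟩ := exists_sumMulSMul_eq_of_mem_span v hy
    exact hS (top_unique ((hreg p rfl).ge.trans (span_mono (image_mono hpS))))
  · rintro h p rfl
    by_contra hp
    exact h _ hp (sumMulSMul_mem_span_pairSupport v p)

theorem isOpen_and_dense_regularValues_sumMulSMul [CompleteSpace 𝕜] [FiniteDimensional 𝕜 E] :
    IsOpen (regularValues 𝕜 (sumMulSMul 𝕜 v)) ∧
      Dense (regularValues 𝕜 (sumMulSMul 𝕜 v)) := by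
  rw [regularValues_sumMulSMul]
  exact ⟨isOpen_biInter_compl_submodule (toFinite _) _,
    dense_biInter_compl_submodule (toFinite _) _ fun _ ↦ id⟩

end

def tkLieCoord {d n : ℕ} (A : Matrix (Fin d) (Fin n) ℤ) (i : Fin n) : tkLie A →L[ℂ] ℂ :=
  .proj i ∘L (tkLie A).subtypeL

theorem muMap_eq_sumMulSMul {d n : ℕ} (A : Matrix (Fin d) (Fin n) ℤ) :
    muMap A = sumMulSMul ℂ (tkLieCoord A) := by
  ext p x
  simp [muMap, muL, sumMulSMul, tkLieCoord]

theorem stmt7_general {d n : ℕ} (A : Matrix (Fin d) (Fin n) ℤ) :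
    IsOpen {lam : tkLie A →L[ℂ] ℂ | IsRegularValue A lam} ∧
    Dense {lam : tkLie A →L[ℂ] ℂ | IsRegularValue A lam} := by
  have h := isOpen_and_dense_regularValues_sumMulSMul (𝕜 := ℂ) (tkLieCoord A)
  rwa [← muMap_eq_sumMulSMul] at h

/-- The set of regular values of the moment map `μ : ℂ^n × ℂ^n → (𝔱^k)^*` is open and dense
in `(𝔱^k)^*`. -/
theorem stmt7 {d n : ℕ} (hd : 0 < d) (hn : 0 < n) (hdn : d ≤ n) (k : ℕ) (hk : k = n - d)
    (A : Matrix (Fin d) (Fin n) ℤ)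
    (hcols : ∀ i : Fin n, (fun j => A j i) ≠ (0 : Fin d → ℤ))
    (hrank : (A.map (Int.cast : ℤ → ℚ)).rank = d) :
    IsOpen {lam : tkLie A →L[ℂ] ℂ | IsRegularValue A lam} ∧
    Dense {lam : tkLie A →L[ℂ] ℂ | IsRegularValue A lam} :=
  stmt7_general A
end
end

section
/- The locally free locus equals the union of the stable sets over all characters: a point z ∈ ℂ^n has finite stabilizer in T^k if and only if there exists α ∈ ℤ^n such that z is α-stable. In other words, (ℂ^n)^{lf} = ⋃_{α} (ℂ^n)^{α-st}. -/
open scoped BigOperators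

noncomputable section

/-- The character `χ_α(t) = Π_i t_i^{α_i}` of `T^k` attached to `α ∈ ℤ^n`. -/
def chiChar {n : ℕ} (α : Fin n → ℤ) (t : Fin n → ℂˣ) : ℂˣ :=
  ∏ i : Fin n, (t i) ^ (α i)

/-- `z` is `α`-semistable if some polynomial `f` with `f(t·x) = χ_α(t)^m f(x)` (for some
`m ≥ 1`) does not vanish at `z`. -/
def Semistable {d n : ℕ} (A : Matrix (Fin d) (Fin n) ℤ) (α : Fin n → ℤ)
    (z : Fin n → ℂ) : Prop :=
  ∃ m : ℕ, 1 ≤ m ∧ ∃ f : MvPolynomial (Fin n) ℂ,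
    (∀ t ∈ Tk A, ∀ x : Fin n → ℂ,
      MvPolynomial.eval (fun i => (t i : ℂ) * x i) f
        = ((chiChar α t : ℂˣ) : ℂ) ^ m * MvPolynomial.eval x f) ∧
    MvPolynomial.eval z f ≠ 0

/-- The `α`-semistable set `(ℂ^n)^{α-ss}`. -/
def ssSet {d n : ℕ} (A : Matrix (Fin d) (Fin n) ℤ) (α : Fin n → ℤ) : Set (Fin n → ℂ) :=
  {z | Semistable A α z}

/-- The `T^k`-orbit of `z ∈ ℂ^n`. -/
def orbit {d n : ℕ} (A : Matrix (Fin d) (Fin n) ℤ) (z : Fin n → ℂ) : Set (Fin n → ℂ) :=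
  {y | ∃ t ∈ Tk A, y = fun i => (t i : ℂ) * z i}

/-- `z` is `α`-stable if it is `α`-semistable, its `T^k`-orbit is closed in the
`α`-semistable set, and its stabilizer in `T^k` is finite. -/
def Stable {d n : ℕ} (A : Matrix (Fin d) (Fin n) ℤ) (α : Fin n → ℤ)
    (z : Fin n → ℂ) : Prop :=
  Semistable A α z ∧
  IsClosed {x : ↥(ssSet A α) | (x : Fin n → ℂ) ∈ orbit A z} ∧
  (stab A z).Finite

/-- The `α`-stable set `(ℂ^n)^{α-st}`. -/
def stSet {d n : ℕ} (A : Matrix (Fin d) (Fin n) ℤ) (α : Fin n → ℤ) : Set (Fin n → ℂ) :=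
  {z | Stable A α z}

/-!
Take for `α` the indicator of the support `S` of `z`. Then `P = ∏_{i ∈ S} X_i` is a
`χ_α`-semi-invariant with `P(z) ≠ 0`, so `z` is `α`-semistable. The orbit of `z` is closed in the
`α`-semistable set: let `x` be a semistable limit of points `t · z`. Any `χ_α^m`-semi-invariant `f`
satisfies `f(y) P(z)^m = P(y)^m f(z)` on the orbit, hence on its closure; taking `f(x) ≠ 0` forces
`P(x) ≠ 0`, i.e. `x_i ≠ 0` for `i ∈ S`. The ratios `s_i = x_i / z_i` are limits of the `t_i`, so
`∏ s_i ^ c_i = 1` for every `c` in the row lattice of `A` supported on `S`. As `ℂ^×` is divisible,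
hence an injective `ℤ`-module, the character `c ↦ ∏ s_i ^ c_i` on the vectors supported on `S`
extends to a character of `ℤ^n` trivial on the row lattice, i.e. to some `t ∈ T^k`, and `t · z = x`.
-/

open MvPolynomial

theorem Complex.surjective_units_zpow {m : ℤ} (hm : m ≠ 0) :
    Function.Surjective fun v : ℂˣ => v ^ m := fun u =>
  ⟨Units.mk0 _ (exp_ne_zero (log u / m)), Units.ext <| by
    rw [Units.val_zpow_eq_zpow_val, Units.val_mk0, ← exp_int_mul,
      mul_div_cancel₀ _ (Int.cast_ne_zero.2 hm), exp_log u.ne_zero]⟩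

theorem Complex.baer_additive_units : Module.Baer ℤ (Additive ℂˣ) :=
  letI : DivisibleBy (Additive ℂˣ) ℤ :=
    divisibleByOfSMulRightSurj _ _ fun hm u => Complex.surjective_units_zpow hm u.toMul
  Module.Baer.of_divisible _

theorem Module.Baer.exists_extension_of_vanishing {R Q V : Type*} [Ring R] [AddCommGroup Q]
    [Module R Q] [AddCommGroup V] [Module R V] (hQ : Module.Baer R Q) {L E : Submodule R V}
    (φ : E →ₗ[R] Q) (hφ : ∀ e : E, (e : V) ∈ L → φ e = 0) :
    ∃ w : V →ₗ[R] Q, L ≤ LinearMap.ker w ∧ w ∘ₗ E.subtype = φ := by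
  set ρ := L.mkQ ∘ₗ E.subtype
  have hker : LinearMap.ker ρ ≤ LinearMap.ker φ := fun e he =>
    hφ e ((Submodule.Quotient.mk_eq_zero L).1 he)
  obtain ⟨h, hh⟩ := hQ.extension_property ((LinearMap.ker ρ).liftQ ρ le_rfl)
    (LinearMap.ker_eq_bot.1 (Submodule.ker_liftQ_eq_bot _ _ _ le_rfl))
    ((LinearMap.ker ρ).liftQ φ hker)
  refine ⟨h ∘ₗ L.mkQ, fun v hv => ?_, LinearMap.ext fun e => ?_⟩
  · simp [(Submodule.Quotient.mk_eq_zero L).2 hv]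
  · exact congr($hh (Submodule.Quotient.mk e))

section prodZPow

variable {ι G : Type*} [Fintype ι] [CommGroup G]

def prodZPowLinearMap (t : ι → G) : (ι → ℤ) →ₗ[ℤ] Additive G :=
  (Pi.basisFun ℤ ι).constr ℤ fun i => Additive.ofMul (t i)

theorem prodZPowLinearMap_apply (t : ι → G) (c : ι → ℤ) :
    prodZPowLinearMap t c = Additive.ofMul (∏ i, t i ^ c i) := by
  simp [prodZPowLinearMap]

theorem prodZPowLinearMap_single [DecidableEq ι] (t : ι → G) (i : ι) :
    prodZPowLinearMap t (Pi.single i 1) = Additive.ofMul (t i) := by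
  rw [← Pi.basisFun_apply]
  exact (Pi.basisFun ℤ ι).constr_basis ℤ _ i

theorem prodZPowLinearMap_self [DecidableEq ι] (w : (ι → ℤ) →ₗ[ℤ] Additive G) :
    prodZPowLinearMap (fun i => (w (Pi.single i 1)).toMul) = w := by
  simp only [prodZPowLinearMap, ofMul_toMul, ← Pi.basisFun_apply]
  exact (Pi.basisFun ℤ ι).constr_self ℤ w

end prodZPow

def rowLattice {d n : ℕ} (A : Matrix (Fin d) (Fin n) ℤ) : Submodule ℤ (Fin n → ℤ) :=
  Submodule.span ℤ (Set.range fun j => A j)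

theorem mem_Tk_iff_rowLattice_le_ker {d n : ℕ} {A : Matrix (Fin d) (Fin n) ℤ}
    {t : Fin n → ℂˣ} : t ∈ Tk A ↔ rowLattice A ≤ LinearMap.ker (prodZPowLinearMap t) := by
  rw [rowLattice, Submodule.span_le, Set.range_subset_iff]
  simp only [SetLike.mem_coe, LinearMap.mem_ker, prodZPowLinearMap_apply, ofMul_eq_zero]
  rfl

theorem exists_mem_Tk_eqOn {d n : ℕ} (A : Matrix (Fin d) (Fin n) ℤ) (S : Set (Fin n))
    (s : Fin n → ℂˣ) (hs : ∀ c ∈ rowLattice A, (∀ i ∉ S, c i = 0) → ∏ i, s i ^ c i = 1) :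
    ∃ t ∈ Tk A, Set.EqOn t s S := by
  classical
  set E : Submodule ℤ (Fin n → ℤ) := Submodule.pi Sᶜ fun _ => ⊥
  obtain ⟨w, hLw, hwE⟩ := Complex.baer_additive_units.exists_extension_of_vanishing
    (L := rowLattice A) (prodZPowLinearMap s ∘ₗ E.subtype) fun e he => by
      rw [LinearMap.comp_apply, Submodule.subtype_apply, prodZPowLinearMap_apply,
        hs e he fun i hi => by simpa using e.2 i hi]
      rfl
  refine ⟨fun i => (w (Pi.single i 1)).toMul,
    mem_Tk_iff_rowLattice_le_ker.2 ((prodZPowLinearMap_self w).symm ▸ hLw), fun i hi => ?_⟩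
  have hsingle : Pi.single i 1 ∈ E := fun j hj => by
    simp [show j ≠ i from fun h => hj (h ▸ hi)]
  have hwi := congr($hwE ⟨_, hsingle⟩)
  rw [LinearMap.comp_apply, LinearMap.comp_apply, Submodule.subtype_apply,
    prodZPowLinearMap_single] at hwi
  exact congrArg Additive.toMul hwi

section support

variable {n : ℕ} (z : Fin n → ℂ)

def supportChar : Fin n → ℤ := fun i => if z i = 0 then 0 else 1

def supportMonomial : MvPolynomial (Fin n) ℂ := ∏ i, if z i = 0 then 1 else X i

theorem eval_supportMonomial (x : Fin n → ℂ) :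
    eval x (supportMonomial z) = ∏ i, if z i = 0 then 1 else x i := by
  simp [supportMonomial, apply_ite]

theorem eval_supportMonomial_smul (t : Fin n → ℂˣ) (x : Fin n → ℂ) :
    eval (fun i => (t i : ℂ) * x i) (supportMonomial z)
      = (chiChar (supportChar z) t : ℂ) * eval x (supportMonomial z) := by
  simp only [eval_supportMonomial, chiChar, supportChar, Units.coe_prod, ← Finset.prod_mul_distrib]
  refine Finset.prod_congr rfl fun i _ => ?_
  by_cases hz : z i = 0 <;> simp [hz]

theorem eval_supportMonomial_self_ne_zero : eval z (supportMonomial z) ≠ 0 := by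
  rw [eval_supportMonomial, Finset.prod_ne_zero_iff]
  intro i _
  split_ifs with hz
  exacts [one_ne_zero, hz]

theorem eval_supportMonomial_eq_zero {x : Fin n → ℂ} {i : Fin n} (hz : z i ≠ 0) (hx : x i = 0) :
    eval x (supportMonomial z) = 0 := by
  rw [eval_supportMonomial]
  exact Finset.prod_eq_zero (Finset.mem_univ i) (by simp [hz, hx])

theorem semistable_supportChar {d : ℕ} (A : Matrix (Fin d) (Fin n) ℤ) :
    Semistable A (supportChar z) z :=
  ⟨1, le_rfl, supportMonomial z, fun t _ x => by rw [pow_one, eval_supportMonomial_smul],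
    eval_supportMonomial_self_ne_zero z⟩

end support

section closure

variable {d n : ℕ} {A : Matrix (Fin d) (Fin n) ℤ} {z x : Fin n → ℂ}

theorem closure_orbit_subset : closure (orbit A z) ⊆ {y | ∀ i, z i = 0 → y i = 0} := by
  refine closure_minimal ?_ ?_
  · rintro _ ⟨t, -, rfl⟩ i hi
    simp [hi]
  · simp only [Set.ofPred_forall]
    exact isClosed_iInter fun i => isClosed_iInter fun _ =>
      isClosed_eq (continuous_apply i) continuous_const

theorem apply_ne_zero_of_mem_closure_orbit (hx : Semistable A (supportChar z) x)
    (hcl : x ∈ closure (orbit A z)) {i : Fin n} (hz : z i ≠ 0) : x i ≠ 0 := by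
  obtain ⟨m, hm, f, hf, hfx⟩ := hx
  have hEq : Set.EqOn (fun y => eval y f * eval z (supportMonomial z) ^ m)
      (fun y => eval y (supportMonomial z) ^ m * eval z f) (orbit A z) := by
    rintro _ ⟨t, ht, rfl⟩
    simp only [hf t ht z, eval_supportMonomial_smul]
    ring
  have hx : eval x f * eval z (supportMonomial z) ^ m = eval x (supportMonomial z) ^ m * eval z f :=
    hEq.closure ((continuous_eval f).mul continuous_const)
      (((continuous_eval _).pow m).mul continuous_const) hcl
  intro hxi
  rw [eval_supportMonomial_eq_zero z hz hxi, zero_pow (by omega), zero_mul] at hx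
  exact hfx ((mul_eq_zero.1 hx).resolve_right (pow_ne_zero _ (eval_supportMonomial_self_ne_zero z)))

theorem prod_zpow_eq_one_of_mem_closure_orbit (hcl : x ∈ closure (orbit A z))
    {s : Fin n → ℂˣ} (hs : ∀ i, z i ≠ 0 → (s i : ℂ) * z i = x i)
    {c : Fin n → ℤ} (hc : c ∈ rowLattice A) (hcz : ∀ i, z i = 0 → c i = 0) :
    ∏ i, s i ^ c i = 1 := by
  set g : (Fin n → ℂ) → ℂ := fun y => ∏ i, (y i / z i) ^ c i
  have hg : ContinuousAt g x := tendsto_finsetProd _ fun i _ => by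
    refine ((continuousAt_apply i x).div_const (z i)).zpow₀ (c i) ?_
    by_cases hz : z i = 0
    · exact Or.inr (hcz i hz).ge
    · exact Or.inl (by simp [← hs i hz, hz])
  have hgx : g x = ((∏ i, s i ^ c i : ℂˣ) : ℂ) := by
    simp only [g, Units.coe_prod, Units.val_zpow_eq_zpow_val]
    refine Finset.prod_congr rfl fun i _ => ?_
    by_cases hz : z i = 0
    · simp [hcz i hz]
    · rw [← hs i hz, mul_div_cancel_right₀ _ hz]
  have hg_orbit : g '' orbit A z ⊆ {1} := by
    rintro _ ⟨_, ⟨t, ht, rfl⟩, rfl⟩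
    have ht1 := LinearMap.mem_ker.1 (mem_Tk_iff_rowLattice_le_ker.1 ht hc)
    rw [prodZPowLinearMap_apply, ofMul_eq_zero] at ht1
    simp only [g, Set.mem_singleton_iff]
    rw [← Units.val_one, ← ht1, Units.coe_prod]
    refine Finset.prod_congr rfl fun i _ => ?_
    by_cases hz : z i = 0
    · simp [hcz i hz]
    · rw [mul_div_cancel_right₀ _ hz, Units.val_zpow_eq_zpow_val]
  have := closure_mono hg_orbit (hg.continuousWithinAt.mem_closure_image hcl)
  rw [closure_singleton, Set.mem_singleton_iff, hgx] at this
  exact Units.ext this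

theorem mem_orbit_of_mem_closure (hx : Semistable A (supportChar z) x)
    (hcl : x ∈ closure (orbit A z)) : x ∈ orbit A z := by
  classical
  have hxz : ∀ i, z i ≠ 0 → x i / z i ≠ 0 := fun i hz =>
    div_ne_zero (apply_ne_zero_of_mem_closure_orbit hx hcl hz) hz
  set s : Fin n → ℂˣ := fun i => if hz : z i = 0 then 1 else Units.mk0 _ (hxz i hz)
  have hs : ∀ i, z i ≠ 0 → (s i : ℂ) * z i = x i := fun i hz => by
    simp [s, hz]
  obtain ⟨t, ht, hts⟩ := exists_mem_Tk_eqOn A (Function.support z) s fun c hc hcz =>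
    prod_zpow_eq_one_of_mem_closure_orbit hcl hs hc fun i hz =>
      hcz i (Function.notMem_support.2 hz)
  refine ⟨t, ht, funext fun i => ?_⟩
  by_cases hz : z i = 0
  · simp [hz, closure_orbit_subset hcl i hz]
  · rw [hts hz, hs i hz]

theorem isClosed_orbit_in_ssSet_supportChar :
    IsClosed {y : ↥(ssSet A (supportChar z)) | (y : Fin n → ℂ) ∈ orbit A z} := by
  convert (isClosed_closure (s := orbit A z)).preimage continuous_subtype_val using 1
  ext y
  exact ⟨fun h => subset_closure h, mem_orbit_of_mem_closure y.2⟩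

end closure

theorem stmt9_general {d n : ℕ} (A : Matrix (Fin d) (Fin n) ℤ) :
    {z : Fin n → ℂ | (stab A z).Finite} = ⋃ α : Fin n → ℤ, stSet A α := by
  ext z
  simp only [Set.mem_ofPred_eq, Set.mem_iUnion]
  exact ⟨fun hfin => ⟨supportChar z, semistable_supportChar z A,
    isClosed_orbit_in_ssSet_supportChar, hfin⟩, fun ⟨_, hst⟩ => hst.2.2⟩

/-- The locally free locus equals the union of the stable sets over all characters:
`(ℂ^n)^{lf} = ⋃_α (ℂ^n)^{α-st}`. -/
theorem stmt9 {d n : ℕ} (hd : 0 < d) (hn : 0 < n) (hdn : d ≤ n) (k : ℕ) (hk : k = n - d)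
    (A : Matrix (Fin d) (Fin n) ℤ)
    (hcols : ∀ i : Fin n, (fun j => A j i) ≠ (0 : Fin d → ℤ))
    (hrank : (A.map (Int.cast : ℤ → ℚ)).rank = d) :
    {z : Fin n → ℂ | (stab A z).Finite} = ⋃ α : Fin n → ℤ, stSet A α :=
  stmt9_general A
end
end

section
/- There are only finitely many distinct stable sets: the collection of subsets of ℂ^n of the form (ℂ^n)^{α-st} = {z ∈ ℂ^n : z is α-stable}, as α ranges over all elements of ℤ^n, is a finite collection of sets. -/
open scoped BigOperators

noncomputable section

/-!
Precomposing a semi-invariant with a coordinatewise scaling `x ↦ c • x` gives a semi-invariant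
of the same weight, since the scaling commutes with `T^k`. Hence a point is `α`-semistable as
soon as some point with smaller support is, so `(ℂ^n)^{α-ss}` is a union of the finitely many
strata `{z | supp z = I}`. There are thus finitely many semistable sets, and the stable set is a
function of the semistable one.
-/

open MvPolynomial in
lemma eval_bind₁_C_mul_X {σ R : Type*} [CommSemiring R] (c y : σ → R) (f : MvPolynomial σ R) :
    eval y (bind₁ (fun i => C (c i) * X i) f) = eval (fun i => c i * y i) f := by
  rw [eval, eval, eval₂Hom_bind₁]
  simp

lemma Semistable.of_mul {d n : ℕ} {A : Matrix (Fin d) (Fin n) ℤ} {α : Fin n → ℤ}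
    {c w : Fin n → ℂ} (h : Semistable A α fun i => c i * w i) : Semistable A α w := by
  obtain ⟨m, hm, f, hf, hfz⟩ := h
  refine ⟨m, hm, MvPolynomial.bind₁ (fun i => .C (c i) * .X i) f, fun t ht x => ?_, ?_⟩
  · rw [eval_bind₁_C_mul_X, eval_bind₁_C_mul_X, ← hf t ht]
    simp_rw [mul_left_comm (c _)]
  · rwa [eval_bind₁_C_mul_X]

lemma exists_mul_eq_of_support_subset {ι K : Type*} [DivisionRing K] {z w : ι → K}
    (h : Function.support z ⊆ Function.support w) : ∃ c : ι → K, (fun i => c i * w i) = z := by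
  refine ⟨fun i => z i / w i, funext fun i => ?_⟩
  by_cases hw : w i = 0
  · simp [hw, Function.notMem_support.mp fun hz => h hz hw]
  · exact div_mul_cancel₀ _ hw

lemma Semistable.of_support_subset {d n : ℕ} {A : Matrix (Fin d) (Fin n) ℤ} {α : Fin n → ℤ}
    {z w : Fin n → ℂ} (hz : Semistable A α z) (h : Function.support z ⊆ Function.support w) :
    Semistable A α w := by
  obtain ⟨c, rfl⟩ := exists_mul_eq_of_support_subset h
  exact hz.of_mul

lemma ssSet_eq_preimage_support {d n : ℕ} (A : Matrix (Fin d) (Fin n) ℤ) (α : Fin n → ℤ) :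
    ssSet A α = Function.support ⁻¹' (Function.support '' ssSet A α) := by
  refine (Set.subset_preimage_image _ _).antisymm ?_
  rintro z ⟨w, hw, hwz⟩
  exact Semistable.of_support_subset hw hwz.le

lemma finite_setOf_ssSet {d n : ℕ} (A : Matrix (Fin d) (Fin n) ℤ) :
    {S : Set (Fin n → ℂ) | ∃ α : Fin n → ℤ, S = ssSet A α}.Finite := by
  refine (Set.finite_range fun T : Set (Set (Fin n)) =>
    (Function.support ⁻¹' T : Set (Fin n → ℂ))).subset ?_
  rintro S ⟨α, rfl⟩
  exact ⟨_, (ssSet_eq_preimage_support A α).symm⟩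

theorem stmt10_general {d n : ℕ}
    (A : Matrix (Fin d) (Fin n) ℤ) :
    {S : Set (Fin n → ℂ) | ∃ α : Fin n → ℤ, S = stSet A α}.Finite := by
  let stableIn (S : Set (Fin n → ℂ)) : Set (Fin n → ℂ) :=
    {z | z ∈ S ∧ IsClosed {x : ↥S | (x : Fin n → ℂ) ∈ orbit A z} ∧ (stab A z).Finite}
  refine ((finite_setOf_ssSet A).image stableIn).subset ?_
  rintro S ⟨α, rfl⟩
  exact ⟨ssSet A α, ⟨α, rfl⟩, rfl⟩

/-- As `α` ranges over `ℤ^n`, only finitely many distinct stable sets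
`(ℂ^n)^{α-st}` occur. -/
theorem stmt10 {d n : ℕ} (hd : 0 < d) (hn : 0 < n) (hdn : d ≤ n) (k : ℕ) (hk : k = n - d)
    (A : Matrix (Fin d) (Fin n) ℤ)
    (hcols : ∀ i : Fin n, (fun j => A j i) ≠ (0 : Fin d → ℤ))
    (hrank : (A.map (Int.cast : ℤ → ℚ)).rank = d) :
    {S : Set (Fin n → ℂ) | ∃ α : Fin n → ℤ, S = stSet A α}.Finite :=
  stmt10_general A
end
end
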